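/- arXiv:2206.08531 — 6 statements merged into one kernel-verified Lean document; each statement's English description precedes it below -/
import Mathlib

section
/- Let X, Y, Z be random variables taking values in ℝ^{d_X}, ℝ^{d_Y}, ℝ^{d_Z} respectively, defined on a common probability space. Then X and Y are conditionally independent given Z if and only if E[f(X,Z) g(Y,Z)] = 0 for all f ∈ L²_{XZ} and g ∈ L²_{YZ} satisfying E[f(X,Z) | Z] = 0 almost surely and E[g(Y,Z) | Z] = 0 almost surely. -/
open MeasureTheory ProbabilityTheory Filter
open scoped ENNReal

section Aux

variable {Ω : Type*} [mΩ : MeasurableSpace Ω] {μ : MeasureTheory.Measure Ω} [IsFiniteMeasure μ]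

lemma aux_norm_mul_le_one {a b : ℝ} (ha : ‖a‖ ≤ 1) (hb : ‖b‖ ≤ 1) : ‖a * b‖ ≤ 1 := by
  rw [norm_mul]
  exact mul_le_one₀ ha (norm_nonneg _) hb

lemma aux_norm_mul3 {a q b : ℝ} (ha : ‖a‖ ≤ 1) (hb : ‖b‖ ≤ 1) : ‖a * q * b‖ ≤ ‖q‖ := by
  rw [norm_mul, norm_mul]
  calc ‖a‖ * ‖q‖ * ‖b‖ = ‖a‖ * ‖b‖ * ‖q‖ := by ring
    _ ≤ 1 * ‖q‖ := by
        apply mul_le_mul_of_nonneg_right _ (norm_nonneg q)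
        exact mul_le_one₀ ha (norm_nonneg b) hb
    _ = ‖q‖ := one_mul _

lemma aux_indicator_norm_le (s : Set Ω) (ω : Ω) :
    ‖(s.indicator (fun _ => (1:ℝ))) ω‖ ≤ 1 := by
  by_cases h : ω ∈ s <;> simp [h]

lemma aux_int_of_bdd {h : Ω → ℝ} (hm : AEStronglyMeasurable h μ) (c : ℝ)
    (hb : ∀ ω, ‖h ω‖ ≤ c) : Integrable h μ :=
  Integrable.mono' (integrable_const c) hm (Eventually.of_forall hb)

lemma aux_setIntegral_as_mul {A : Set Ω} (hA : MeasurableSet A) (h : Ω → ℝ) :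
    ∫ ω in A, h ω ∂μ = ∫ ω, A.indicator (fun _ => (1:ℝ)) ω * h ω ∂μ := by
  rw [← integral_indicator hA]
  refine integral_congr_ae (Eventually.of_forall fun ω => ?_)
  by_cases hω : ω ∈ A <;> simp [hω]

lemma aux_setIntegral_ext {S : Set (Set Ω)} (hπ : IsPiSystem S)
    (hle : MeasurableSpace.generateFrom S ≤ mΩ) {h₁ h₂ : Ω → ℝ}
    (i₁ : Integrable h₁ μ) (i₂ : Integrable h₂ μ)
    (huniv : ∫ ω, h₁ ω ∂μ = ∫ ω, h₂ ω ∂μ)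
    (hS : ∀ s ∈ S, ∫ ω in s, h₁ ω ∂μ = ∫ ω in s, h₂ ω ∂μ)
    {s : Set Ω} (hs : MeasurableSet[MeasurableSpace.generateFrom S] s) :
    ∫ ω in s, h₁ ω ∂μ = ∫ ω in s, h₂ ω ∂μ := by
  refine MeasurableSpace.induction_on_inter (m := MeasurableSpace.generateFrom S)
    (C := fun u _ => ∫ ω in u, h₁ ω ∂μ = ∫ ω in u, h₂ ω ∂μ) rfl hπ (by simp) hS ?_ ?_ s hs
  · intro t htm ht
    have e₁ := integral_add_compl (μ := μ) (hle t htm) i₁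
    have e₂ := integral_add_compl (μ := μ) (hle t htm) i₂
    linarith
  · intro f hd hfm hf
    rw [integral_iUnion (μ := μ) (fun i => hle _ (hfm i)) hd i₁.integrableOn,
      integral_iUnion (μ := μ) (fun i => hle _ (hfm i)) hd i₂.integrableOn]
    exact tsum_congr hf

lemma aux_integral_mul_condexp {m : MeasurableSpace Ω} (hle : m ≤ mΩ) {f g : Ω → ℝ}
    (hf : StronglyMeasurable[m] f) (hfg : Integrable (fun ω => f ω * g ω) μ)
    (hg : Integrable g μ) :
    ∫ ω, f ω * g ω ∂μ = ∫ ω, f ω * (μ[g|m]) ω ∂μ := by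
  have hfg' : Integrable (f * g) μ := hfg
  have h1 : ∫ ω, (f * g) ω ∂μ = ∫ ω, (μ[f * g|m]) ω ∂μ := (integral_condExp hle).symm
  have h2 := integral_congr_ae (condExp_mul_of_stronglyMeasurable_left hf hfg' hg)
  simpa [Pi.mul_apply] using h1.trans h2

end Aux

section Main

variable {Ω α β γ : Type*} [MeasurableSpace Ω] [StandardBorelSpace Ω] [Nonempty Ω]
  [MeasurableSpace α] [StandardBorelSpace α] [Nonempty α]
  [MeasurableSpace β] [StandardBorelSpace β] [Nonempty β]
  [mγ : MeasurableSpace γ]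
  {μ : MeasureTheory.Measure Ω} [IsProbabilityMeasure μ]
  {X : Ω → α} {Y : Ω → β} {Z : Ω → γ}

lemma auxB (hX : Measurable X) (hY : Measurable Y) (hZ : Measurable Z)
    (hind : CondIndepFun (MeasurableSpace.comap Z mγ) hZ.comap_le X Y μ)
    {A : Set α} (hA : MeasurableSet A) :
    μ[(X ⁻¹' A).indicator (fun _ => (1:ℝ)) |
        MeasurableSpace.comap (fun ω => (Y ω, Z ω)) inferInstance]
      =ᵐ[μ] fun ω => (condDistrib X Z μ (Z ω) A).toReal := by
  have hYZm : Measurable fun ω => (Y ω, Z ω) := hY.prodMk hZ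
  have hm' : MeasurableSpace.comap Z mγ ≤ _ := hZ.comap_le
  have hmYZ : MeasurableSpace.comap (fun ω => (Y ω, Z ω)) inferInstance ≤ _ := hYZm.comap_le
  have hm'le : MeasurableSpace.comap Z mγ ≤
      MeasurableSpace.comap (fun ω => (Y ω, Z ω)) inferInstance := by
    have h1 : MeasurableSpace.comap Z mγ =
        MeasurableSpace.comap (fun ω => (Y ω, Z ω)) (MeasurableSpace.comap Prod.snd mγ) := by
      rw [MeasurableSpace.comap_comp]; rfl
    rw [h1]
    exact MeasurableSpace.comap_mono measurable_snd.comap_le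
  have hu_meas : StronglyMeasurable ((X ⁻¹' A).indicator (fun _ => (1:ℝ))) :=
    stronglyMeasurable_const.indicator (hX hA)
  have hu_int : Integrable ((X ⁻¹' A).indicator (fun _ => (1:ℝ))) μ :=
    (integrable_const (1:ℝ)).indicator (hX hA)
  set Φ : Ω → ℝ := fun ω => (condDistrib X Z μ (Z ω) A).toReal with hΦdef
  have hΦ_meas' : Measurable[MeasurableSpace.comap Z mγ] Φ := by
    have h1 : Measurable fun z => (condDistrib X Z μ z A).toReal :=
      (Kernel.measurable_coe _ hA).ennreal_toReal
    exact h1.comp (comap_measurable Z)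
  have hΦ_sm : StronglyMeasurable[MeasurableSpace.comap Z mγ] Φ := hΦ_meas'.stronglyMeasurable
  have hΦ_bdd : ∀ ω, ‖Φ ω‖ ≤ 1 := by
    intro ω
    rw [Real.norm_eq_abs, abs_of_nonneg ENNReal.toReal_nonneg]
    simpa using ENNReal.toReal_mono (by simp) (prob_le_one (μ := condDistrib X Z μ (Z ω)) (s := A))
  have hΦ_int : Integrable Φ μ :=
    aux_int_of_bdd (hΦ_sm.mono hm').aestronglyMeasurable 1 hΦ_bdd
  have hΦeq : Φ =ᵐ[μ] μ[(X ⁻¹' A).indicator (fun _ => (1:ℝ))|MeasurableSpace.comap Z mγ] :=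
    condDistrib_ae_eq_condExp (μ := μ) hZ hX hA
  refine (ae_eq_condExp_of_forall_setIntegral_eq hmYZ hu_int
    (fun s _ _ => hΦ_int.integrableOn) ?_ ((hΦ_sm.mono hm'le).aestronglyMeasurable)).symm
  intro s hs _
  have hgen : MeasurableSpace.comap (fun ω => (Y ω, Z ω)) inferInstance =
      MeasurableSpace.generateFrom
      (Set.preimage (fun ω => (Y ω, Z ω)) ''
        Set.image2 (· ×ˢ ·) {s : Set β | MeasurableSet s} {t : Set γ | MeasurableSet t}) := by
    conv_lhs => rw [← generateFrom_prod]
    rw [MeasurableSpace.comap_generateFrom]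
  refine aux_setIntegral_ext (isPiSystem_prod.comap _) (hgen ▸ hmYZ) hΦ_int hu_int ?_ ?_
    (hgen ▸ hs)
  · rw [integral_congr_ae hΦeq, integral_condExp hm']
  · rintro _ ⟨_, ⟨B, hB, C, hC, rfl⟩, rfl⟩
    rw [Set.mk_preimage_prod]
    have hBmeas : MeasurableSet (Y ⁻¹' B) := hY hB
    have hCmeas : MeasurableSet (Z ⁻¹' C) := hZ hC
    have hbc_meas : MeasurableSet (Y ⁻¹' B ∩ Z ⁻¹' C) := hBmeas.inter hCmeas
    set b : Ω → ℝ := (Y ⁻¹' B).indicator (fun _ => (1:ℝ)) with hbdef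
    set c : Ω → ℝ := (Z ⁻¹' C).indicator (fun _ => (1:ℝ)) with hcdef
    set w : Ω → ℝ := (X ⁻¹' A ∩ Y ⁻¹' B).indicator (fun _ => (1:ℝ)) with hwdef
    have hc_sm : StronglyMeasurable[MeasurableSpace.comap Z mγ] c :=
      stronglyMeasurable_const.indicator ⟨C, hC, rfl⟩
    have hb_sm : StronglyMeasurable b := stronglyMeasurable_const.indicator hBmeas
    have hb_int : Integrable b μ := (integrable_const (1:ℝ)).indicator hBmeas
    have hw_int : Integrable w μ := (integrable_const (1:ℝ)).indicator ((hX hA).inter hBmeas)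
    have hprod := (condIndepFun_iff_condExp_inter_preimage_eq_mul hX hY).mp hind A B hA hB
    have hL : ∫ ω in Y ⁻¹' B ∩ Z ⁻¹' C, Φ ω ∂μ
        = ∫ ω, (c ω * Φ ω) * (μ[b|MeasurableSpace.comap Z mγ]) ω ∂μ := by
      calc ∫ ω in Y ⁻¹' B ∩ Z ⁻¹' C, Φ ω ∂μ
          = ∫ ω, (Y ⁻¹' B ∩ Z ⁻¹' C).indicator (fun _ => (1:ℝ)) ω * Φ ω ∂μ :=
            aux_setIntegral_as_mul hbc_meas Φ
        _ = ∫ ω, (c ω * Φ ω) * b ω ∂μ := by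
            refine integral_congr_ae (Eventually.of_forall fun ω => ?_)
            by_cases h1 : ω ∈ Y ⁻¹' B <;> by_cases h2 : ω ∈ Z ⁻¹' C <;>
              simp [hbdef, hcdef, Set.indicator_apply, h1, h2]
        _ = ∫ ω, (c ω * Φ ω) * (μ[b|MeasurableSpace.comap Z mγ]) ω ∂μ := by
            refine aux_integral_mul_condexp hm' (hc_sm.mul hΦ_sm) ?_ hb_int
            refine aux_int_of_bdd ?_ 1 ?_
            · exact (((hc_sm.mono hm').mul (hΦ_sm.mono hm')).mul hb_sm).aestronglyMeasurable
            · intro ω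
              refine le_trans (aux_norm_mul3 ?_ ?_) (hΦ_bdd ω)
              · exact aux_indicator_norm_le _ _
              · exact aux_indicator_norm_le _ _
    have hR : ∫ ω in Y ⁻¹' B ∩ Z ⁻¹' C, (X ⁻¹' A).indicator (fun _ => (1:ℝ)) ω ∂μ
        = ∫ ω, (c ω * Φ ω) * (μ[b|MeasurableSpace.comap Z mγ]) ω ∂μ := by
      calc ∫ ω in Y ⁻¹' B ∩ Z ⁻¹' C, (X ⁻¹' A).indicator (fun _ => (1:ℝ)) ω ∂μ
          = ∫ ω, (Y ⁻¹' B ∩ Z ⁻¹' C).indicator (fun _ => (1:ℝ)) ω *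
              (X ⁻¹' A).indicator (fun _ => (1:ℝ)) ω ∂μ := aux_setIntegral_as_mul hbc_meas _
        _ = ∫ ω, c ω * w ω ∂μ := by
            refine integral_congr_ae (Eventually.of_forall fun ω => ?_)
            by_cases h1 : ω ∈ Y ⁻¹' B <;> by_cases h2 : ω ∈ Z ⁻¹' C <;>
              by_cases h3 : ω ∈ X ⁻¹' A <;>
              simp [hbdef, hcdef, hwdef, Set.indicator_apply, h1, h2, h3]
        _ = ∫ ω, c ω * (μ[w|MeasurableSpace.comap Z mγ]) ω ∂μ := by
            refine aux_integral_mul_condexp hm' hc_sm ?_ hw_int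
            refine aux_int_of_bdd ?_ 1 ?_
            · exact ((hc_sm.mono hm').mul
                (stronglyMeasurable_const.indicator ((hX hA).inter hBmeas))).aestronglyMeasurable
            · intro ω
              calc ‖c ω * w ω‖ = ‖c ω * w ω * (1:ℝ)‖ := by rw [mul_one]
                _ ≤ ‖w ω‖ := aux_norm_mul3 (aux_indicator_norm_le _ _) (by norm_num)
                _ ≤ 1 := aux_indicator_norm_le _ _
        _ = ∫ ω, c ω * ((μ[(X ⁻¹' A).indicator (fun _ => (1:ℝ))|MeasurableSpace.comap Z mγ]) ω *
              (μ[b|MeasurableSpace.comap Z mγ]) ω) ∂μ := by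
            refine integral_congr_ae ?_
            filter_upwards [hprod] with ω h
            rw [hwdef]
            erw [h]
        _ = ∫ ω, (c ω * Φ ω) * (μ[b|MeasurableSpace.comap Z mγ]) ω ∂μ := by
            refine integral_congr_ae ?_
            filter_upwards [hΦeq] with ω h
            rw [← h]
            ring
    rw [hL, hR]

lemma auxC (hX : Measurable X) (hY : Measurable Y) (hZ : Measurable Z)
    (hind : CondIndepFun (MeasurableSpace.comap Z mγ) hZ.comap_le X Y μ)
    {g : β × γ → ℝ} (hg : Measurable g)
    (hG_int : Integrable (fun ω => g (Y ω, Z ω)) μ) :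
    μ[(fun ω => g (Y ω, Z ω)) | MeasurableSpace.comap (fun ω => (X ω, Z ω)) inferInstance]
      =ᵐ[μ] μ[(fun ω => g (Y ω, Z ω)) | MeasurableSpace.comap Z mγ] := by
  have hXZm : Measurable fun ω => (X ω, Z ω) := hX.prodMk hZ
  have hYZm : Measurable fun ω => (Y ω, Z ω) := hY.prodMk hZ
  have hm' : MeasurableSpace.comap Z mγ ≤ _ := hZ.comap_le
  have hmXZ : MeasurableSpace.comap (fun ω => (X ω, Z ω)) inferInstance ≤ _ := hXZm.comap_le
  have hmYZ : MeasurableSpace.comap (fun ω => (Y ω, Z ω)) inferInstance ≤ _ := hYZm.comap_le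
  have hm'le : MeasurableSpace.comap Z mγ ≤
      MeasurableSpace.comap (fun ω => (X ω, Z ω)) inferInstance := by
    have h1 : MeasurableSpace.comap Z mγ =
        MeasurableSpace.comap (fun ω => (X ω, Z ω)) (MeasurableSpace.comap Prod.snd mγ) := by
      rw [MeasurableSpace.comap_comp]; rfl
    rw [h1]
    exact MeasurableSpace.comap_mono measurable_snd.comap_le
  set G : Ω → ℝ := fun ω => g (Y ω, Z ω) with hGdef
  have hG_sm : StronglyMeasurable G := (hg.comp hYZm).stronglyMeasurable
  refine (ae_eq_condExp_of_forall_setIntegral_eq hmXZ hG_int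
    (fun s _ _ => integrable_condExp.integrableOn) ?_
    ((stronglyMeasurable_condExp.mono hm'le).aestronglyMeasurable)).symm
  intro s hs _
  have hgen : MeasurableSpace.comap (fun ω => (X ω, Z ω)) inferInstance =
      MeasurableSpace.generateFrom
      (Set.preimage (fun ω => (X ω, Z ω)) ''
        Set.image2 (· ×ˢ ·) {s : Set α | MeasurableSet s} {t : Set γ | MeasurableSet t}) := by
    conv_lhs => rw [← generateFrom_prod]
    rw [MeasurableSpace.comap_generateFrom]
  refine aux_setIntegral_ext (isPiSystem_prod.comap _) (hgen ▸ hmXZ) integrable_condExp hG_int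
    ?_ ?_ (hgen ▸ hs)
  · exact integral_condExp hm'
  · rintro _ ⟨_, ⟨A, hA, C, hC, rfl⟩, rfl⟩
    rw [Set.mk_preimage_prod]
    have hAmeas : MeasurableSet (X ⁻¹' A) := hX hA
    have hCmeas : MeasurableSet (Z ⁻¹' C) := hZ hC
    have hac_meas : MeasurableSet (X ⁻¹' A ∩ Z ⁻¹' C) := hAmeas.inter hCmeas
    set u : Ω → ℝ := (X ⁻¹' A).indicator (fun _ => (1:ℝ)) with hudef
    set c : Ω → ℝ := (Z ⁻¹' C).indicator (fun _ => (1:ℝ)) with hcdef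
    set Φ : Ω → ℝ := fun ω => (condDistrib X Z μ (Z ω) A).toReal with hΦdef
    have hu_sm : StronglyMeasurable u := stronglyMeasurable_const.indicator hAmeas
    have hu_int : Integrable u μ := (integrable_const (1:ℝ)).indicator hAmeas
    have hc_sm : StronglyMeasurable[MeasurableSpace.comap Z mγ] c :=
      stronglyMeasurable_const.indicator ⟨C, hC, rfl⟩
    have hΦ_meas' : Measurable[MeasurableSpace.comap Z mγ] Φ := by
      have h1 : Measurable fun z => (condDistrib X Z μ z A).toReal :=
        (Kernel.measurable_coe _ hA).ennreal_toReal
      exact h1.comp (comap_measurable Z)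
    have hΦ_sm : StronglyMeasurable[MeasurableSpace.comap Z mγ] Φ := hΦ_meas'.stronglyMeasurable
    have hΦ_bdd : ∀ ω, ‖Φ ω‖ ≤ 1 := by
      intro ω
      rw [Real.norm_eq_abs, abs_of_nonneg ENNReal.toReal_nonneg]
      simpa using ENNReal.toReal_mono (by simp)
        (prob_le_one (μ := condDistrib X Z μ (Z ω)) (s := A))
    have hΦeq : Φ =ᵐ[μ] μ[u|MeasurableSpace.comap Z mγ] :=
      condDistrib_ae_eq_condExp (μ := μ) hZ hX hA
    have hB := auxB hX hY hZ hind hA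
    set G' : Ω → ℝ := fun ω => c ω * G ω with hG'def
    have hG'_sm : StronglyMeasurable[MeasurableSpace.comap (fun ω => (Y ω, Z ω)) inferInstance]
        G' := by
      have h1 : G' = (fun p : β × γ => C.indicator (fun _ => (1:ℝ)) p.2 * g p) ∘
          (fun ω => (Y ω, Z ω)) := by
        funext ω
        by_cases h : Z ω ∈ C <;> simp [hG'def, hGdef, hcdef, Set.indicator_apply, h]
      rw [h1]
      exact ((((measurable_const.indicator hC).comp measurable_snd).mul hg).comp
        (comap_measurable _)).stronglyMeasurable
    have hG'u_int : Integrable (fun ω => G' ω * u ω) μ := by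
      refine Integrable.mono hG_int ?_ (Eventually.of_forall fun ω => ?_)
      · exact (((hG'_sm.mono hmYZ).mul hu_sm)).aestronglyMeasurable
      · calc ‖G' ω * u ω‖ = ‖c ω * G ω * u ω‖ := rfl
          _ ≤ ‖G ω‖ := aux_norm_mul3 (aux_indicator_norm_le _ _) (aux_indicator_norm_le _ _)
    have hL : ∫ ω in X ⁻¹' A ∩ Z ⁻¹' C,
          (μ[G|MeasurableSpace.comap Z mγ]) ω ∂μ
        = ∫ ω, (c ω * Φ ω) * (μ[G|MeasurableSpace.comap Z mγ]) ω ∂μ := by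
      calc ∫ ω in X ⁻¹' A ∩ Z ⁻¹' C, (μ[G|MeasurableSpace.comap Z mγ]) ω ∂μ
          = ∫ ω, (X ⁻¹' A ∩ Z ⁻¹' C).indicator (fun _ => (1:ℝ)) ω *
              (μ[G|MeasurableSpace.comap Z mγ]) ω ∂μ := aux_setIntegral_as_mul hac_meas _
        _ = ∫ ω, (c ω * (μ[G|MeasurableSpace.comap Z mγ]) ω) * u ω ∂μ := by
            refine integral_congr_ae (Eventually.of_forall fun ω => ?_)
            by_cases h1 : ω ∈ X ⁻¹' A <;> by_cases h2 : ω ∈ Z ⁻¹' C <;>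
              simp [hudef, hcdef, Set.indicator_apply, h1, h2]
        _ = ∫ ω, (c ω * (μ[G|MeasurableSpace.comap Z mγ]) ω) *
              (μ[u|MeasurableSpace.comap Z mγ]) ω ∂μ := by
            refine aux_integral_mul_condexp hm' (hc_sm.mul stronglyMeasurable_condExp) ?_ hu_int
            refine Integrable.mono
              (integrable_condExp (f := G) (m := MeasurableSpace.comap Z mγ)) ?_
              (Eventually.of_forall fun ω => ?_)
            · exact (((hc_sm.mono hm').mul
                (stronglyMeasurable_condExp.mono hm')).mul hu_sm).aestronglyMeasurable
            · exact aux_norm_mul3 (aux_indicator_norm_le _ _) (aux_indicator_norm_le _ _)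
        _ = ∫ ω, (c ω * Φ ω) * (μ[G|MeasurableSpace.comap Z mγ]) ω ∂μ := by
            refine integral_congr_ae ?_
            filter_upwards [hΦeq] with ω h
            rw [← h]
            ring
    have hR : ∫ ω in X ⁻¹' A ∩ Z ⁻¹' C, G ω ∂μ
        = ∫ ω, (c ω * Φ ω) * (μ[G|MeasurableSpace.comap Z mγ]) ω ∂μ := by
      calc ∫ ω in X ⁻¹' A ∩ Z ⁻¹' C, G ω ∂μ
          = ∫ ω, (X ⁻¹' A ∩ Z ⁻¹' C).indicator (fun _ => (1:ℝ)) ω * G ω ∂μ :=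
            aux_setIntegral_as_mul hac_meas _
        _ = ∫ ω, G' ω * u ω ∂μ := by
            refine integral_congr_ae (Eventually.of_forall fun ω => ?_)
            by_cases h1 : ω ∈ X ⁻¹' A <;> by_cases h2 : ω ∈ Z ⁻¹' C <;>
              simp [hudef, hcdef, hG'def, Set.indicator_apply, h1, h2]
        _ = ∫ ω, G' ω *
              (μ[u|MeasurableSpace.comap (fun ω => (Y ω, Z ω)) inferInstance]) ω ∂μ :=
            aux_integral_mul_condexp hmYZ hG'_sm hG'u_int hu_int
        _ = ∫ ω, G' ω * Φ ω ∂μ := by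
            refine integral_congr_ae ?_
            filter_upwards [hB] with ω h
            rw [h]
        _ = ∫ ω, (c ω * Φ ω) * G ω ∂μ := by
            refine integral_congr_ae (Eventually.of_forall fun ω => ?_)
            simp only [hG'def]
            ring
        _ = ∫ ω, (c ω * Φ ω) * (μ[G|MeasurableSpace.comap Z mγ]) ω ∂μ := by
            refine aux_integral_mul_condexp hm' (hc_sm.mul hΦ_sm) ?_ hG_int
            refine Integrable.mono hG_int ?_ (Eventually.of_forall fun ω => ?_)
            · exact ((((hc_sm.mono hm').mul (hΦ_sm.mono hm')).mul hG_sm)).aestronglyMeasurable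
            · calc ‖c ω * Φ ω * G ω‖ = ‖c ω * (Φ ω * G ω)‖ := by rw [mul_assoc]
                _ = ‖Φ ω * G ω * c ω‖ := by rw [mul_comm]
                _ ≤ ‖Φ ω * G ω‖ := by
                    have := aux_norm_mul3 (a := (1:ℝ)) (q := Φ ω * G ω) (b := c ω)
                      (by norm_num) (aux_indicator_norm_le _ _)
                    simpa using this
                _ = ‖Φ ω‖ * ‖G ω‖ := norm_mul _ _
                _ ≤ 1 * ‖G ω‖ :=
                    mul_le_mul_of_nonneg_right (hΦ_bdd ω) (norm_nonneg _)
                _ = ‖G ω‖ := one_mul _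
    rw [hL, hR]

end Main


/-- Daudin's characterization of conditional independence.

Random variables `X, Y, Z` with values in `ℝ^{dX}, ℝ^{dY}, ℝ^{dZ}` are conditionally
independent given `Z` if and only if `E[f(X,Z) g(Y,Z)] = 0` for all square-integrable
`f ∈ L²_{XZ}` and `g ∈ L²_{YZ}` with `E[f(X,Z) | Z] = 0` a.s. and `E[g(Y,Z) | Z] = 0` a.s. -/
theorem stmt1
    {Ω : Type*} [MeasurableSpace Ω] [StandardBorelSpace Ω] [Nonempty Ω]
    (μ : Measure Ω) [IsProbabilityMeasure μ]
    {dX dY dZ : ℕ}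
    (X : Ω → (Fin dX → ℝ)) (Y : Ω → (Fin dY → ℝ)) (Z : Ω → (Fin dZ → ℝ))
    (hX : Measurable X) (hY : Measurable Y) (hZ : Measurable Z) :
    CondIndepFun (MeasurableSpace.comap Z MeasurableSpace.pi)
        (measurable_iff_comap_le.mp hZ) X Y μ ↔
      ∀ (f : (Fin dX → ℝ) × (Fin dZ → ℝ) → ℝ) (g : (Fin dY → ℝ) × (Fin dZ → ℝ) → ℝ),
        Measurable f → Measurable g →
        MemLp (fun ω => f (X ω, Z ω)) 2 μ →
        MemLp (fun ω => g (Y ω, Z ω)) 2 μ →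
        μ[(fun ω => f (X ω, Z ω)) | MeasurableSpace.comap Z MeasurableSpace.pi] =ᵐ[μ] 0 →
        μ[(fun ω => g (Y ω, Z ω)) | MeasurableSpace.comap Z MeasurableSpace.pi] =ᵐ[μ] 0 →
        ∫ ω, f (X ω, Z ω) * g (Y ω, Z ω) ∂μ = 0 := by
  constructor
  · intro hind f g hf hg hfL2 hgL2 hcf hcg
    have hXZm : Measurable fun ω => (X ω, Z ω) := hX.prodMk hZ
    have hmXZ : MeasurableSpace.comap (fun ω => (X ω, Z ω)) inferInstance ≤ _ := hXZm.comap_le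
    have hF_sm : StronglyMeasurable[MeasurableSpace.comap (fun ω => (X ω, Z ω)) inferInstance]
        (fun ω => f (X ω, Z ω)) := (hf.comp (comap_measurable _)).stronglyMeasurable
    have hG_int : Integrable (fun ω => g (Y ω, Z ω)) μ := hgL2.integrable one_le_two
    have hFG_int : Integrable (fun ω => f (X ω, Z ω) * g (Y ω, Z ω)) μ := by
      have h := memLp_one_iff_integrable.mp
        (MemLp.smul hgL2 hfL2 (p := 2) (q := 2) (r := 1))
      exact h
    have hred := auxC hX hY hZ hind hg hG_int
    calc ∫ ω, f (X ω, Z ω) * g (Y ω, Z ω) ∂μ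
        = ∫ ω, f (X ω, Z ω) * (μ[(fun ω => g (Y ω, Z ω))|MeasurableSpace.comap
            (fun ω => (X ω, Z ω)) inferInstance]) ω ∂μ :=
          aux_integral_mul_condexp hmXZ hF_sm hFG_int hG_int
      _ = 0 := by
          rw [show (0:ℝ) = ∫ _ω, (0:ℝ) ∂μ from (integral_zero _ _).symm]
          refine integral_congr_ae ?_
          filter_upwards [hred, hcg] with ω h1 h2
          rw [h1, h2]
          simp
  · intro h
    have hm' : MeasurableSpace.comap Z MeasurableSpace.pi ≤ _ := hZ.comap_le
    rw [condIndepFun_iff_condExp_inter_preimage_eq_mul hX hY]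
    intro s t hs ht
    set φ₀ : (Fin dZ → ℝ) → ℝ := fun z => (condDistrib X Z μ z s).toReal with hφ₀def
    set ψ₀ : (Fin dZ → ℝ) → ℝ := fun z => (condDistrib Y Z μ z t).toReal with hψ₀def
    have hφ₀m : Measurable φ₀ := (Kernel.measurable_coe _ hs).ennreal_toReal
    have hψ₀m : Measurable ψ₀ := (Kernel.measurable_coe _ ht).ennreal_toReal
    have hφ₀bdd : ∀ z, ‖φ₀ z‖ ≤ 1 := by
      intro z
      rw [Real.norm_eq_abs, abs_of_nonneg ENNReal.toReal_nonneg]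
      simpa using ENNReal.toReal_mono (by simp)
        (prob_le_one (μ := condDistrib X Z μ z) (s := s))
    have hψ₀bdd : ∀ z, ‖ψ₀ z‖ ≤ 1 := by
      intro z
      rw [Real.norm_eq_abs, abs_of_nonneg ENNReal.toReal_nonneg]
      simpa using ENNReal.toReal_mono (by simp)
        (prob_le_one (μ := condDistrib Y Z μ z) (s := t))
    set u : Ω → ℝ := (X ⁻¹' s).indicator (fun _ => (1:ℝ)) with hudef
    set v : Ω → ℝ := (Y ⁻¹' t).indicator (fun _ => (1:ℝ)) with hvdef
    set Φ : Ω → ℝ := fun ω => φ₀ (Z ω) with hΦdef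
    set Ψ : Ω → ℝ := fun ω => ψ₀ (Z ω) with hΨdef
    have hΦeq : Φ =ᵐ[μ] μ[u|MeasurableSpace.comap Z MeasurableSpace.pi] :=
      condDistrib_ae_eq_condExp (μ := μ) hZ hX hs
    have hΨeq : Ψ =ᵐ[μ] μ[v|MeasurableSpace.comap Z MeasurableSpace.pi] :=
      condDistrib_ae_eq_condExp (μ := μ) hZ hY ht
    have hΦ_sm' : StronglyMeasurable[MeasurableSpace.comap Z MeasurableSpace.pi] Φ :=
      (hφ₀m.comp (comap_measurable Z)).stronglyMeasurable
    have hΨ_sm' : StronglyMeasurable[MeasurableSpace.comap Z MeasurableSpace.pi] Ψ :=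
      (hψ₀m.comp (comap_measurable Z)).stronglyMeasurable
    have hΦ_sm : StronglyMeasurable Φ := hΦ_sm'.mono hm'
    have hΨ_sm : StronglyMeasurable Ψ := hΨ_sm'.mono hm'
    have hu_sm : StronglyMeasurable u := stronglyMeasurable_const.indicator (hX hs)
    have hv_sm : StronglyMeasurable v := stronglyMeasurable_const.indicator (hY ht)
    have hu_int : Integrable u μ := (integrable_const (1:ℝ)).indicator (hX hs)
    have hv_int : Integrable v μ := (integrable_const (1:ℝ)).indicator (hY ht)
    have hΦ_int : Integrable Φ μ :=
      aux_int_of_bdd hΦ_sm.aestronglyMeasurable 1 (fun ω => hφ₀bdd (Z ω))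
    have hΨ_int : Integrable Ψ μ :=
      aux_int_of_bdd hΨ_sm.aestronglyMeasurable 1 (fun ω => hψ₀bdd (Z ω))
    have hu_bdd : ∀ ω, ‖u ω‖ ≤ 1 := fun ω => aux_indicator_norm_le _ _
    have hv_bdd : ∀ ω, ‖v ω‖ ≤ 1 := fun ω => aux_indicator_norm_le _ _
    have key : ∀ C : Set (Fin dZ → ℝ), MeasurableSet C →
        ∫ ω in Z ⁻¹' C, Φ ω * Ψ ω ∂μ
          = ∫ ω in Z ⁻¹' C, (X ⁻¹' s ∩ Y ⁻¹' t).indicator (fun _ => (1:ℝ)) ω ∂μ := by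
      intro C hC
      set c : Ω → ℝ := (Z ⁻¹' C).indicator (fun _ => (1:ℝ)) with hcdef
      have hc_sm' : StronglyMeasurable[MeasurableSpace.comap Z MeasurableSpace.pi] c :=
        stronglyMeasurable_const.indicator ⟨C, hC, rfl⟩
      have hc_sm : StronglyMeasurable c := hc_sm'.mono hm'
      have hc_bdd : ∀ ω, ‖c ω‖ ≤ 1 := fun ω => aux_indicator_norm_le _ _
      -- apply the hypothesis to explicit test functions
      set fs : (Fin dX → ℝ) × (Fin dZ → ℝ) → ℝ :=
        fun p => (s.indicator (fun _ => (1:ℝ)) p.1 - φ₀ p.2) *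
          C.indicator (fun _ => (1:ℝ)) p.2 with hfsdef
      set gt : (Fin dY → ℝ) × (Fin dZ → ℝ) → ℝ :=
        fun p => t.indicator (fun _ => (1:ℝ)) p.1 - ψ₀ p.2 with hgtdef
      have hfs_m : Measurable fs := by
        refine Measurable.mul ?_ ?_
        · exact ((measurable_const.indicator hs).comp measurable_fst).sub
            (hφ₀m.comp measurable_snd)
        · exact (measurable_const.indicator hC).comp measurable_snd
      have hgt_m : Measurable gt := by
        exact ((measurable_const.indicator ht).comp measurable_fst).sub
          (hψ₀m.comp measurable_snd)
      have hfcomp : (fun ω => fs (X ω, Z ω)) = fun ω => (u ω - Φ ω) * c ω := by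
        funext ω
        by_cases h1 : X ω ∈ s <;> by_cases h2 : Z ω ∈ C <;>
          simp [hfsdef, hudef, hcdef, hΦdef, Set.indicator_apply, h1, h2]
      have hgcomp : (fun ω => gt (Y ω, Z ω)) = fun ω => v ω - Ψ ω := by
        funext ω
        by_cases h1 : Y ω ∈ t <;>
          simp [hgtdef, hvdef, hΨdef, Set.indicator_apply, h1]
      have hfbd : ∀ ω, ‖(u ω - Φ ω) * c ω‖ ≤ 2 := by
        intro ω
        calc ‖(u ω - Φ ω) * c ω‖ ≤ ‖u ω - Φ ω‖ * ‖c ω‖ := by rw [norm_mul]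
          _ ≤ (‖u ω‖ + ‖Φ ω‖) * 1 := by
              refine mul_le_mul (norm_sub_le _ _) (hc_bdd ω) (norm_nonneg _) ?_
              positivity
          _ ≤ 2 := by
              have := hu_bdd ω
              have := hφ₀bdd (Z ω)
              simp only [mul_one]
              calc ‖u ω‖ + ‖Φ ω‖ ≤ 1 + 1 := by
                    exact add_le_add (hu_bdd ω) (hφ₀bdd (Z ω))
                _ = 2 := by norm_num
      have hgbd : ∀ ω, ‖v ω - Ψ ω‖ ≤ 2 := by
        intro ω
        calc ‖v ω - Ψ ω‖ ≤ ‖v ω‖ + ‖Ψ ω‖ := norm_sub_le _ _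
          _ ≤ 1 + 1 := add_le_add (hv_bdd ω) (hψ₀bdd (Z ω))
          _ = 2 := by norm_num
      have hfsL2 : MemLp (fun ω => fs (X ω, Z ω)) 2 μ := by
        rw [hfcomp]
        exact MemLp.of_bound (((hu_sm.sub hΦ_sm).mul hc_sm)).aestronglyMeasurable 2
          (Eventually.of_forall hfbd)
      have hgtL2 : MemLp (fun ω => gt (Y ω, Z ω)) 2 μ := by
        rw [hgcomp]
        exact MemLp.of_bound ((hv_sm.sub hΨ_sm)).aestronglyMeasurable 2
          (Eventually.of_forall hgbd)
      have hsubcond : μ[u - Φ|MeasurableSpace.comap Z MeasurableSpace.pi] =ᵐ[μ] 0 := by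
        have h1 := condExp_sub (m := MeasurableSpace.comap Z MeasurableSpace.pi) hu_int hΦ_int
        have h2 : μ[Φ|MeasurableSpace.comap Z MeasurableSpace.pi] = Φ :=
          condExp_of_stronglyMeasurable hm' hΦ_sm' hΦ_int
        refine h1.trans ?_
        rw [h2]
        filter_upwards [hΦeq] with ω hω
        simp only [Pi.sub_apply, Pi.zero_apply]
        rw [← hω]
        ring
      have hsubcond' : μ[v - Ψ|MeasurableSpace.comap Z MeasurableSpace.pi] =ᵐ[μ] 0 := by
        have h1 := condExp_sub (m := MeasurableSpace.comap Z MeasurableSpace.pi) hv_int hΨ_int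
        have h2 : μ[Ψ|MeasurableSpace.comap Z MeasurableSpace.pi] = Ψ :=
          condExp_of_stronglyMeasurable hm' hΨ_sm' hΨ_int
        refine h1.trans ?_
        rw [h2]
        filter_upwards [hΨeq] with ω hω
        simp only [Pi.sub_apply, Pi.zero_apply]
        rw [← hω]
        ring
      have hfcond : μ[(fun ω => fs (X ω, Z ω))|MeasurableSpace.comap Z MeasurableSpace.pi]
          =ᵐ[μ] 0 := by
        rw [hfcomp]
        have e2 : (fun ω => (u ω - Φ ω) * c ω) = c * (u - Φ) := by
          funext ω
          simp only [Pi.mul_apply, Pi.sub_apply]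
          ring
        rw [e2]
        have hmul := condExp_mul_of_stronglyMeasurable_left (μ := μ) hc_sm'
          (aux_int_of_bdd (hc_sm.mul (hu_sm.sub hΦ_sm)).aestronglyMeasurable 2
            (fun ω => by
              simp only [Pi.mul_apply, Pi.sub_apply]
              calc ‖c ω * (u ω - Φ ω)‖ = ‖(u ω - Φ ω) * c ω‖ := by rw [mul_comm]
                _ ≤ 2 := hfbd ω))
          (hu_int.sub hΦ_int)
        refine hmul.trans ?_
        filter_upwards [hsubcond] with ω hω
        simp only [Pi.mul_apply, Pi.zero_apply]
        rw [hω]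
        simp
      have hgcond : μ[(fun ω => gt (Y ω, Z ω))|MeasurableSpace.comap Z MeasurableSpace.pi]
          =ᵐ[μ] 0 := by
        rw [hgcomp]
        have e2 : (fun ω => v ω - Ψ ω) = v - Ψ := rfl
        rw [e2]
        exact hsubcond'
      have h0 := h fs gt hfs_m hgt_m hfsL2 hgtL2 hfcond hgcond
      -- expand the product
      have hexp : (fun ω => fs (X ω, Z ω) * gt (Y ω, Z ω)) =
          fun ω => (c ω * (u ω * v ω) - c ω * (u ω * Ψ ω)) -
            (c ω * (Φ ω * v ω) - c ω * (Φ ω * Ψ ω)) := by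
        funext ω
        have e1 : fs (X ω, Z ω) = (u ω - Φ ω) * c ω := congrFun hfcomp ω
        have e2 : gt (Y ω, Z ω) = v ω - Ψ ω := congrFun hgcomp ω
        rw [e1, e2]
        ring
      have i1 : Integrable (fun ω => c ω * (u ω * v ω)) μ :=
        aux_int_of_bdd ((hc_sm.mul (hu_sm.mul hv_sm))).aestronglyMeasurable 1
          (fun ω => aux_norm_mul_le_one (hc_bdd ω)
            (aux_norm_mul_le_one (hu_bdd ω) (hv_bdd ω)))
      have i2 : Integrable (fun ω => c ω * (u ω * Ψ ω)) μ :=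
        aux_int_of_bdd ((hc_sm.mul (hu_sm.mul hΨ_sm))).aestronglyMeasurable 1
          (fun ω => aux_norm_mul_le_one (hc_bdd ω)
            (aux_norm_mul_le_one (hu_bdd ω) (hψ₀bdd (Z ω))))
      have i3 : Integrable (fun ω => c ω * (Φ ω * v ω)) μ :=
        aux_int_of_bdd ((hc_sm.mul (hΦ_sm.mul hv_sm))).aestronglyMeasurable 1
          (fun ω => aux_norm_mul_le_one (hc_bdd ω)
            (aux_norm_mul_le_one (hφ₀bdd (Z ω)) (hv_bdd ω)))
      have i4 : Integrable (fun ω => c ω * (Φ ω * Ψ ω)) μ :=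
        aux_int_of_bdd ((hc_sm.mul (hΦ_sm.mul hΨ_sm))).aestronglyMeasurable 1
          (fun ω => aux_norm_mul_le_one (hc_bdd ω)
            (aux_norm_mul_le_one (hφ₀bdd (Z ω)) (hψ₀bdd (Z ω))))
      have h4 : ∫ ω, fs (X ω, Z ω) * gt (Y ω, Z ω) ∂μ
          = (∫ ω, c ω * (u ω * v ω) ∂μ - ∫ ω, c ω * (u ω * Ψ ω) ∂μ) -
            (∫ ω, c ω * (Φ ω * v ω) ∂μ - ∫ ω, c ω * (Φ ω * Ψ ω) ∂μ) := by
        have i12 : Integrable (fun ω => c ω * (u ω * v ω) - c ω * (u ω * Ψ ω)) μ := i1.sub i2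
        have i34 : Integrable (fun ω => c ω * (Φ ω * v ω) - c ω * (Φ ω * Ψ ω)) μ := i3.sub i4
        rw [show (fun ω => fs (X ω, Z ω) * gt (Y ω, Z ω)) = _ from hexp]
        rw [integral_sub i12 i34, integral_sub i1 i2, integral_sub i3 i4]
      have e_uΨ : ∫ ω, c ω * (u ω * Ψ ω) ∂μ = ∫ ω, c ω * (Φ ω * Ψ ω) ∂μ := by
        calc ∫ ω, c ω * (u ω * Ψ ω) ∂μ = ∫ ω, (c ω * Ψ ω) * u ω ∂μ := by
              refine integral_congr_ae (Eventually.of_forall fun ω => ?_)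
              ring
          _ = ∫ ω, (c ω * Ψ ω) * (μ[u|MeasurableSpace.comap Z MeasurableSpace.pi]) ω ∂μ := by
              refine aux_integral_mul_condexp hm' (hc_sm'.mul hΨ_sm') ?_ hu_int
              refine aux_int_of_bdd ((hc_sm.mul hΨ_sm).mul hu_sm).aestronglyMeasurable 1 ?_
              intro ω
              exact aux_norm_mul_le_one (aux_norm_mul_le_one (hc_bdd ω) (hψ₀bdd (Z ω)))
                (hu_bdd ω)
          _ = ∫ ω, c ω * (Φ ω * Ψ ω) ∂μ := by
              refine integral_congr_ae ?_
              filter_upwards [hΦeq] with ω hω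
              rw [← hω]
              ring
      have e_Φv : ∫ ω, c ω * (Φ ω * v ω) ∂μ = ∫ ω, c ω * (Φ ω * Ψ ω) ∂μ := by
        calc ∫ ω, c ω * (Φ ω * v ω) ∂μ = ∫ ω, (c ω * Φ ω) * v ω ∂μ := by
              refine integral_congr_ae (Eventually.of_forall fun ω => ?_)
              ring
          _ = ∫ ω, (c ω * Φ ω) * (μ[v|MeasurableSpace.comap Z MeasurableSpace.pi]) ω ∂μ := by
              refine aux_integral_mul_condexp hm' (hc_sm'.mul hΦ_sm') ?_ hv_int
              refine aux_int_of_bdd ((hc_sm.mul hΦ_sm).mul hv_sm).aestronglyMeasurable 1 ?_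
              intro ω
              exact aux_norm_mul_le_one (aux_norm_mul_le_one (hc_bdd ω) (hφ₀bdd (Z ω)))
                (hv_bdd ω)
          _ = ∫ ω, c ω * (Φ ω * Ψ ω) ∂μ := by
              refine integral_congr_ae ?_
              filter_upwards [hΨeq] with ω hω
              rw [← hω]
              ring
      have hmain : ∫ ω, c ω * (u ω * v ω) ∂μ = ∫ ω, c ω * (Φ ω * Ψ ω) ∂μ := by
        rw [h4] at h0
        rw [e_uΨ, e_Φv] at h0
        linarith
      -- convert to set integrals
      calc ∫ ω in Z ⁻¹' C, Φ ω * Ψ ω ∂μ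
          = ∫ ω, c ω * (Φ ω * Ψ ω) ∂μ := aux_setIntegral_as_mul (hZ hC) _
        _ = ∫ ω, c ω * (u ω * v ω) ∂μ := hmain.symm
        _ = ∫ ω, c ω * ((X ⁻¹' s ∩ Y ⁻¹' t).indicator (fun _ => (1:ℝ))) ω ∂μ := by
            refine integral_congr_ae (Eventually.of_forall fun ω => ?_)
            by_cases h1 : X ω ∈ s <;> by_cases h2 : Y ω ∈ t <;>
              simp [hudef, hvdef, Set.indicator_apply, h1, h2]
        _ = ∫ ω in Z ⁻¹' C, (X ⁻¹' s ∩ Y ⁻¹' t).indicator (fun _ => (1:ℝ)) ω ∂μ :=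
            (aux_setIntegral_as_mul (hZ hC) _).symm
    have hΦΨ_int : Integrable (fun ω => Φ ω * Ψ ω) μ :=
      aux_int_of_bdd ((hΦ_sm.mul hΨ_sm)).aestronglyMeasurable 1
        (fun ω => aux_norm_mul_le_one (hφ₀bdd (Z ω)) (hψ₀bdd (Z ω)))
    have hfinal := ae_eq_condExp_of_forall_setIntegral_eq hm'
      ((integrable_const (1:ℝ)).indicator ((hX hs).inter (hY ht)))
      (fun s' _ _ => hΦΨ_int.integrableOn)
      (by
        rintro _ ⟨C, hC, rfl⟩ _
        exact key C hC)
      ((hΦ_sm'.mul hΨ_sm').aestronglyMeasurable)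
    filter_upwards [hfinal, hΦeq, hΨeq] with ω h1 h2 h3
    rw [← h1, ← h2, ← h3]
end

section
/- Let X, Y, Z be random variables taking values in ℝ^{d_X}, ℝ^{d_Y}, ℝ^{d_Z} with joint law P. Define S(X,Y|Z) = sup over f ∈ L²_{XZ} and g ∈ L²_{YZ} of ρ²(f(X,Z) − h*(Z), g(Y,Z) − l*(Z)), where h*(Z) = E[f(X,Z) | Z], l*(Z) = E[g(Y,Z) | Z], and the supremum is taken over pairs for which both centered variables have strictly positive variance (with the convention that the supremum of the empty family is 0). Then S(X,Y|Z) ∈ [0,1], and S(X,Y|Z) = 0 if and only if X and Y are conditionally independent given Z. -/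
open MeasureTheory ProbabilityTheory Filter
open scoped ENNReal

section NCDAux
variable {α : Type*} {m m0 : MeasurableSpace α} {μ : Measure α}

lemma myIndicatorIntegral {β : Type*} {mβ : MeasurableSpace β} (ν : Measure β) {s : Set β}
    (hs : MeasurableSet[mβ] s) (e : ℝ) :
    ∫ ω, s.indicator (fun _ => e) ω ∂ν = (ν s).toReal * e := by
  rw [integral_indicator_const e hs, smul_eq_mul, measureReal_def]

lemma myIntegrableMul [IsFiniteMeasure μ] {F G : α → ℝ}
    (hF : MemLp F 2 μ) (hG : MemLp G 2 μ) : Integrable (fun ω => F ω * G ω) μ := by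
  refine Integrable.mono' ((hF.integrable_sq.add hG.integrable_sq).div_const 2)
    (hF.aestronglyMeasurable.mul hG.aestronglyMeasurable) (ae_of_all _ fun ω => ?_)
  have := sq_nonneg (F ω - G ω)
  have := sq_nonneg (F ω + G ω)
  simp only [Real.norm_eq_abs, abs_mul, Pi.add_apply]
  rcases abs_cases (F ω) with ⟨h1, _⟩ | ⟨h1, _⟩ <;> rcases abs_cases (G ω) with ⟨h2, _⟩ | ⟨h2, _⟩ <;>
    rw [h1, h2] <;> nlinarith

lemma myCondexpL2AE (hm : m ≤ m0) [IsProbabilityMeasure μ] {F : α → ℝ} (hF : MemLp F 2 μ) :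
    μ[F|m] =ᵐ[μ] (condExpL2 ℝ ℝ hm (hF.toLp F) : α →₂[μ] ℝ) := by
  refine (ae_eq_condExp_of_forall_setIntegral_eq hm (hF.integrable one_le_two)
    (fun s _ _ => ((Lp.memLp _).integrable one_le_two).integrableOn)
    (fun s hs hμs => ?_) (aestronglyMeasurable_condExpL2 hm _)).symm
  rw [integral_condExpL2_eq hm (hF.toLp F) hs hμs.ne]
  exact setIntegral_congr_ae (hm s hs) ((hF.coeFn_toLp).mono fun x hx _ => hx)

lemma myMemL2Condexp (hm : m ≤ m0) [IsProbabilityMeasure μ] {F : α → ℝ} (hF : MemLp F 2 μ) :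
    MemLp (μ[F|m]) 2 μ :=
  (Lp.memLp _).ae_eq (myCondexpL2AE hm hF).symm

lemma myCondexpMul (hm : m ≤ m0) [IsProbabilityMeasure μ] {F G : α → ℝ}
    (hF : MemLp F 2 μ) (hG : MemLp G 2 μ) :
    ∫ ω, (μ[F|m]) ω * G ω ∂μ = ∫ ω, (μ[F|m]) ω * (μ[G|m]) ω ∂μ := by
  have h1 : Integrable (μ[F|m] * G) μ := myIntegrableMul (myMemL2Condexp hm hF) hG
  have h2 := condExp_mul_of_stronglyMeasurable_left (μ := μ) (m := m) stronglyMeasurable_condExp h1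
    (hG.integrable one_le_two)
  calc ∫ ω, (μ[F|m]) ω * G ω ∂μ = ∫ ω, (μ[F|m] * G) ω ∂μ := rfl
    _ = ∫ ω, (μ[μ[F|m] * G|m]) ω ∂μ := (integral_condExp hm).symm
    _ = ∫ ω, ((μ[F|m]) * (μ[G|m])) ω ∂μ := integral_congr_ae h2
    _ = _ := rfl

lemma myMeanZero (hm : m ≤ m0) [IsProbabilityMeasure μ] {F : α → ℝ} (hF : MemLp F 2 μ) :
    ∫ ω, (F ω - (μ[F|m]) ω) ∂μ = 0 := by
  rw [integral_sub (hF.integrable one_le_two) integrable_condExp, integral_condExp hm, sub_self]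

lemma myCovEq (hm : m ≤ m0) [IsProbabilityMeasure μ] {F G : α → ℝ}
    (hF : MemLp F 2 μ) (hG : MemLp G 2 μ) :
    ∫ ω, (F ω - (μ[F|m]) ω) * (G ω - (μ[G|m]) ω) ∂μ
      = ∫ ω, F ω * G ω ∂μ - ∫ ω, (μ[F|m]) ω * (μ[G|m]) ω ∂μ := by
  have hcF := myMemL2Condexp hm hF
  have hcG := myMemL2Condexp hm hG
  have e1 : ∀ ω, (F ω - (μ[F|m]) ω) * (G ω - (μ[G|m]) ω)
      = (F ω * G ω - (μ[F|m]) ω * G ω)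
        - (F ω * (μ[G|m]) ω - (μ[F|m]) ω * (μ[G|m]) ω) := fun ω => by ring
  simp_rw [e1]
  have I1 : Integrable (fun ω => F ω * G ω - (μ[F|m]) ω * G ω) μ :=
    (myIntegrableMul hF hG).sub (myIntegrableMul hcF hG)
  have I2 : Integrable (fun ω => F ω * (μ[G|m]) ω - (μ[F|m]) ω * (μ[G|m]) ω) μ :=
    (myIntegrableMul hF hcG).sub (myIntegrableMul hcF hcG)
  have E0 : ∫ ω, ((F ω * G ω - (μ[F|m]) ω * G ω)
      - (F ω * (μ[G|m]) ω - (μ[F|m]) ω * (μ[G|m]) ω)) ∂μ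
      = (∫ ω, (F ω * G ω - (μ[F|m]) ω * G ω) ∂μ)
        - ∫ ω, (F ω * (μ[G|m]) ω - (μ[F|m]) ω * (μ[G|m]) ω) ∂μ := integral_sub I1 I2
  have E1 : ∫ ω, (F ω * G ω - (μ[F|m]) ω * G ω) ∂μ
      = (∫ ω, F ω * G ω ∂μ) - ∫ ω, (μ[F|m]) ω * G ω ∂μ :=
    integral_sub (myIntegrableMul hF hG) (myIntegrableMul hcF hG)
  have E2 : ∫ ω, (F ω * (μ[G|m]) ω - (μ[F|m]) ω * (μ[G|m]) ω) ∂μ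
      = (∫ ω, F ω * (μ[G|m]) ω ∂μ) - ∫ ω, (μ[F|m]) ω * (μ[G|m]) ω ∂μ :=
    integral_sub (myIntegrableMul hF hcG) (myIntegrableMul hcF hcG)
  rw [E0, E1, E2, myCondexpMul hm hF hG]
  have e2 : ∫ ω, F ω * (μ[G|m]) ω ∂μ = ∫ ω, (μ[G|m]) ω * F ω ∂μ := by simp_rw [mul_comm]
  have e3 : ∫ ω, (μ[G|m]) ω * (μ[F|m]) ω ∂μ = ∫ ω, (μ[F|m]) ω * (μ[G|m]) ω ∂μ := by
    simp_rw [mul_comm]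
  rw [e2, myCondexpMul hm hG hF, e3]
  ring

lemma myCS [IsProbabilityMeasure μ] {u v : α → ℝ} (hu : MemLp u 2 μ) (hv : MemLp v 2 μ) :
    (∫ ω, u ω * v ω ∂μ)^2 ≤ (∫ ω, u ω^2 ∂μ) * (∫ ω, v ω^2 ∂μ) := by
  set U := hu.toLp u
  set V := hv.toLp v
  have hinner : ∀ (A B : Lp ℝ 2 μ), (inner ℝ A B : ℝ) = ∫ ω, A ω * B ω ∂μ := by
    intro A B
    rw [L2.inner_def]
    congr 1
    funext ω; simp [mul_comm]
  have hUV : (inner ℝ U V : ℝ) = ∫ ω, u ω * v ω ∂μ := by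
    rw [hinner]
    exact integral_congr_ae ((hu.coeFn_toLp).mul (hv.coeFn_toLp))
  have hUU : (inner ℝ U U : ℝ) = ∫ ω, u ω^2 ∂μ := by
    rw [hinner]
    refine integral_congr_ae ?_
    filter_upwards [hu.coeFn_toLp] with ω h
    rw [h, sq]
  have hVV : (inner ℝ V V : ℝ) = ∫ ω, v ω^2 ∂μ := by
    rw [hinner]
    refine integral_congr_ae ?_
    filter_upwards [hv.coeFn_toLp] with ω h
    rw [h, sq]
  rw [← hUV, ← hUU, ← hVV, real_inner_self_eq_norm_sq, real_inner_self_eq_norm_sq]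
  calc (inner ℝ U V : ℝ)^2 = |(inner ℝ U V : ℝ)|^2 := (sq_abs _).symm
    _ ≤ (‖U‖ * ‖V‖)^2 := by
        have := abs_real_inner_le_norm U V
        exact pow_le_pow_left₀ (abs_nonneg _) this 2
    _ = ‖U‖^2 * ‖V‖^2 := by ring

lemma myVanish (hm : m ≤ m0) [IsProbabilityMeasure μ] (T : Lp ℝ 2 μ →L[ℝ] ℝ)
    (h_ind : ∀ (c : ℝ) (s : Set α) (hs : MeasurableSet[m] s),
        T (indicatorConstLp 2 (hm s hs) (measure_ne_top μ s) c) = 0) :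
    ∀ f : Lp ℝ 2 μ, AEStronglyMeasurable[m] f μ → T f = 0 := by
  haveI : Fact ((1:ℝ≥0∞) ≤ 2) := ⟨one_le_two⟩
  refine Lp.induction_stronglyMeasurable hm ENNReal.ofNat_ne_top
    (fun f => T f = 0) ?_ ?_ ?_
  · intro c s hs hμs
    rw [Lp.simpleFunc.coe_indicatorConst]
    exact h_ind c s hs
  · intro f g hf hg _ _ _ hPf hPg
    rw [map_add, hPf, hPg, add_zero]
  · have : Continuous fun f : lpMeas ℝ ℝ m 2 μ => T f :=
      T.continuous.comp continuous_subtype_val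
    exact isClosed_eq this continuous_const

noncomputable def myP (hm : m ≤ m0) (μ : Measure α) : Lp ℝ 2 μ →L[ℝ] Lp ℝ 2 μ :=
  (lpMeas ℝ ℝ m 2 μ).subtypeL.comp (condExpL2 ℝ ℝ hm)

lemma myP_ae (hm : m ≤ m0) [IsProbabilityMeasure μ] (A : Lp ℝ 2 μ) :
    (myP hm μ A : α → ℝ) =ᵐ[μ] μ[A|m] := by
  have h := myCondexpL2AE hm (Lp.memLp A)
  rw [Lp.toLp_coeFn] at h
  exact h.symm

noncomputable def myT (hm : m ≤ m0) (μ : Measure α) (A : Lp ℝ 2 μ) : Lp ℝ 2 μ →L[ℝ] ℝ :=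
  (innerSL ℝ A) - (innerSL ℝ (myP hm μ A)).comp (myP hm μ)

lemma myT_apply (hm : m ≤ m0) (A B : Lp ℝ 2 μ) :
    myT hm μ A B = (inner ℝ A B : ℝ) - (inner ℝ (myP hm μ A) (myP hm μ B) : ℝ) := rfl

lemma myT_symm (hm : m ≤ m0) (A B : Lp ℝ 2 μ) : myT hm μ A B = myT hm μ B A := by
  rw [myT_apply, myT_apply, real_inner_comm, real_inner_comm (myP hm μ A)]

lemma myT_eq (hm : m ≤ m0) [IsProbabilityMeasure μ] (A B : Lp ℝ 2 μ) :
    myT hm μ A B = ∫ ω, A ω * B ω ∂μ - ∫ ω, (μ[A|m]) ω * (μ[B|m]) ω ∂μ := by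
  have hinner : ∀ (C D : Lp ℝ 2 μ), (inner ℝ C D : ℝ) = ∫ ω, C ω * D ω ∂μ := by
    intro C D
    rw [L2.inner_def]
    congr 1
    funext ω; simp [mul_comm]
  rw [myT_apply, hinner, hinner]
  congr 1
  exact integral_congr_ae ((myP_ae hm A).mul (myP_ae hm B))

lemma myBase (hm : m ≤ m0) {m₁ m₂ : MeasurableSpace α} (hm₁ : m₁ ≤ m0) (hm₂ : m₂ ≤ m0)
    [IsProbabilityMeasure μ]
    (hprod : ∀ s t, MeasurableSet[m₁] s → MeasurableSet[m₂] t →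
       (μ[(s ∩ t).indicator (fun _ => (1:ℝ))|m]) =ᵐ[μ]
         (μ[s.indicator (fun _ => (1:ℝ))|m]) * (μ[t.indicator (fun _ => (1:ℝ))|m]))
    (c d : ℝ) (s t : Set α) (hs : MeasurableSet[m₁] s) (ht : MeasurableSet[m₂] t) :
    myT hm μ (indicatorConstLp 2 (hm₁ s hs) (measure_ne_top μ s) c)
      (indicatorConstLp 2 (hm₂ t ht) (measure_ne_top μ t) d) = 0 := by
  have hA : (indicatorConstLp 2 (hm₁ s hs) (measure_ne_top μ s) c : α → ℝ)
      =ᵐ[μ] s.indicator (fun _ => c) := indicatorConstLp_coeFn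
  have hB : (indicatorConstLp 2 (hm₂ t ht) (measure_ne_top μ t) d : α → ℝ)
      =ᵐ[μ] t.indicator (fun _ => d) := indicatorConstLp_coeFn
  have hsm : s.indicator (fun _ => c) = c • s.indicator (fun _ => (1:ℝ)) := by
    funext x; by_cases hx : x ∈ s <;> simp [hx]
  have htm : t.indicator (fun _ => d) = d • t.indicator (fun _ => (1:ℝ)) := by
    funext x; by_cases hx : x ∈ t <;> simp [hx]
  have L : ∫ ω, (indicatorConstLp 2 (hm₁ s hs) (measure_ne_top μ s) c : α → ℝ) ω
      * (indicatorConstLp 2 (hm₂ t ht) (measure_ne_top μ t) d : α → ℝ) ω ∂μ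
      = (μ (s ∩ t)).toReal * (c * d) := by
    erw [integral_congr_ae (hA.mul hB)]
    have e : ∀ ω, s.indicator (fun _ => c) ω * t.indicator (fun _ => d) ω
        = (s ∩ t).indicator (fun _ => c * d) ω := fun ω =>
      (Set.inter_indicator_mul (fun _ => c) (fun _ => d) ω).symm
    simp_rw [Pi.mul_apply, e]
    exact myIndicatorIntegral μ ((hm₁ s hs).inter (hm₂ t ht)) (c * d)
  have e1 : μ[(indicatorConstLp 2 (hm₁ s hs) (measure_ne_top μ s) c : α → ℝ)|m]
      =ᵐ[μ] fun ω => c * (μ[s.indicator (fun _ => (1:ℝ))|m]) ω := by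
    refine (condExp_congr_ae hA).trans ?_
    rw [hsm]
    refine (condExp_smul c _ m).trans (Eventually.of_forall fun ω => by simp)
  have e2 : μ[(indicatorConstLp 2 (hm₂ t ht) (measure_ne_top μ t) d : α → ℝ)|m]
      =ᵐ[μ] fun ω => d * (μ[t.indicator (fun _ => (1:ℝ))|m]) ω := by
    refine (condExp_congr_ae hB).trans ?_
    rw [htm]
    refine (condExp_smul d _ m).trans (Eventually.of_forall fun ω => by simp)
  have h3 : ∫ ω, (μ[s.indicator (fun _ => (1:ℝ))|m]) ω
      * (μ[t.indicator (fun _ => (1:ℝ))|m]) ω ∂μ = (μ (s ∩ t)).toReal := by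
    calc ∫ ω, (μ[s.indicator (fun _ => (1:ℝ))|m]) ω
          * (μ[t.indicator (fun _ => (1:ℝ))|m]) ω ∂μ
        = ∫ ω, (μ[(s ∩ t).indicator (fun _ => (1:ℝ))|m]) ω ∂μ :=
          (integral_congr_ae (hprod s t hs ht)).symm
      _ = ∫ ω, (s ∩ t).indicator (fun _ => (1:ℝ)) ω ∂μ := integral_condExp hm
      _ = (μ (s ∩ t)).toReal := by
          rw [myIndicatorIntegral μ ((hm₁ s hs).inter (hm₂ t ht)) (1:ℝ), mul_one]
  have R : ∫ ω, (μ[(indicatorConstLp 2 (hm₁ s hs) (measure_ne_top μ s) c : α → ℝ)|m]) ω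
      * (μ[(indicatorConstLp 2 (hm₂ t ht) (measure_ne_top μ t) d : α → ℝ)|m]) ω ∂μ
      = (μ (s ∩ t)).toReal * (c * d) := by
    erw [integral_congr_ae (e1.mul e2)]
    have e : ∀ (a b : ℝ), (c * a) * (d * b) = (c * d) * (a * b) := fun a b => by ring
    simp_rw [Pi.mul_apply, e]
    rw [integral_const_mul, h3]
    ring
  rw [myT_eq hm, L, R, sub_self]

lemma myProdIdentity (hm : m ≤ m0) {m₁ m₂ : MeasurableSpace α} (hm₁ : m₁ ≤ m0) (hm₂ : m₂ ≤ m0)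
    [IsProbabilityMeasure μ]
    (hprod : ∀ s t, MeasurableSet[m₁] s → MeasurableSet[m₂] t →
       (μ[(s ∩ t).indicator (fun _ => (1:ℝ))|m]) =ᵐ[μ]
         (μ[s.indicator (fun _ => (1:ℝ))|m]) * (μ[t.indicator (fun _ => (1:ℝ))|m]))
    {F G : α → ℝ} (hF : MemLp F 2 μ) (hG : MemLp G 2 μ)
    (hFm : AEStronglyMeasurable[m₁] F μ) (hGm : AEStronglyMeasurable[m₂] G μ) :
    ∫ ω, F ω * G ω ∂μ = ∫ ω, (μ[F|m]) ω * (μ[G|m]) ω ∂μ := by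
  set A := hF.toLp F with hAdef
  set B := hG.toLp G with hBdef
  have hAm : AEStronglyMeasurable[m₁] (A : α → ℝ) μ := hFm.congr hF.coeFn_toLp.symm
  have hBm : AEStronglyMeasurable[m₂] (B : α → ℝ) μ := hGm.congr hG.coeFn_toLp.symm
  have step2 : ∀ (c : ℝ) (s : Set α) (hs : MeasurableSet[m₁] s),
      myT hm μ (indicatorConstLp 2 (hm₁ s hs) (measure_ne_top μ s) c) B = 0 := fun c s hs =>
    myVanish hm₂ (myT hm μ (indicatorConstLp 2 (hm₁ s hs) (measure_ne_top μ s) c))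
      (fun d t ht => myBase hm hm₁ hm₂ hprod c d s t hs ht) B hBm
  have step3 : myT hm μ B A = 0 := by
    refine myVanish hm₁ (myT hm μ B) (fun c s hs => ?_) A hAm
    rw [myT_symm]
    exact step2 c s hs
  rw [myT_symm, myT_eq] at step3
  have hax : ∫ ω, (A : α → ℝ) ω * (B : α → ℝ) ω ∂μ = ∫ ω, F ω * G ω ∂μ :=
    integral_congr_ae (hF.coeFn_toLp.mul hG.coeFn_toLp)
  have hax2 : ∫ ω, (μ[(A : α → ℝ)|m]) ω * (μ[(B : α → ℝ)|m]) ω ∂μ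
      = ∫ ω, (μ[F|m]) ω * (μ[G|m]) ω ∂μ :=
    integral_congr_ae ((condExp_congr_ae hF.coeFn_toLp).mul (condExp_congr_ae hG.coeFn_toLp))
  rw [hax, hax2] at step3
  linarith

lemma myPullOut (hm : m ≤ m0) [IsProbabilityMeasure μ] {b e : Set α}
    (hb : MeasurableSet[m] b) (he : MeasurableSet[m0] e) :
    μ[(b ∩ e).indicator (fun _ => (1:ℝ))|m]
      =ᵐ[μ] fun ω => b.indicator (fun _ => (1:ℝ)) ω * (μ[e.indicator (fun _ => (1:ℝ))|m]) ω := by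
  have hbe : (b ∩ e).indicator (fun _ => (1:ℝ))
      = (b.indicator (fun _ => (1:ℝ))) * (e.indicator (fun _ => (1:ℝ))) := by
    funext ω; by_cases h1 : ω ∈ b <;> by_cases h2 : ω ∈ e <;>
      simp [Set.indicator_apply, h1, h2]
  rw [hbe]
  have hint : Integrable (b.indicator (fun _ => (1:ℝ)) * e.indicator (fun _ => (1:ℝ))) μ := by
    rw [← hbe]; exact (integrable_const (1:ℝ)).indicator ((hm b hb).inter he)
  refine (condExp_mul_of_stronglyMeasurable_left (stronglyMeasurable_const.indicator hb) hint
    ((integrable_const (1:ℝ)).indicator he)).trans ?_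
  exact Eventually.of_forall fun ω => rfl

end NCDAux

/-- The squared Pearson correlation coefficient `ρ²(u, v) = cov(u,v)² / (var(u) var(v))`
of two real random variables under the measure `μ`. -/
noncomputable def corrSq {Ω : Type*} [MeasurableSpace Ω] (μ : Measure Ω) (u v : Ω → ℝ) : ℝ :=
  (∫ ω, (u ω - ∫ ω', u ω' ∂μ) * (v ω - ∫ ω', v ω' ∂μ) ∂μ) ^ 2 /
    (ProbabilityTheory.variance u μ * ProbabilityTheory.variance v μ)

/-- the population NCD measure characterizes conditional independence.

With `S(X,Y|Z)` the supremum over square-integrable test functions `f ∈ L²_{XZ}`,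
`g ∈ L²_{YZ}` of `ρ²(f(X,Z) − E[f(X,Z)|Z], g(Y,Z) − E[g(Y,Z)|Z])`, taken over the pairs
for which both centered variables have strictly positive variance (sup of the empty family
being `0`, which is the convention of `Real.sSup`), one has `S(X,Y|Z) ∈ [0,1]`, and
`S(X,Y|Z) = 0` if and only if `X ⫫ Y | Z`. -/
theorem stmt2
    {Ω : Type*} [MeasurableSpace Ω] [StandardBorelSpace Ω] [Nonempty Ω]
    (μ : Measure Ω) [IsProbabilityMeasure μ]
    {dX dY dZ : ℕ}
    (X : Ω → (Fin dX → ℝ)) (Y : Ω → (Fin dY → ℝ)) (Z : Ω → (Fin dZ → ℝ))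
    (hX : Measurable X) (hY : Measurable Y) (hZ : Measurable Z)
    (S : ℝ)
    (hS : S = sSup {r : ℝ |
      ∃ (f : (Fin dX → ℝ) × (Fin dZ → ℝ) → ℝ) (g : (Fin dY → ℝ) × (Fin dZ → ℝ) → ℝ),
        Measurable f ∧ Measurable g ∧
        MemLp (fun ω => f (X ω, Z ω)) 2 μ ∧
        MemLp (fun ω => g (Y ω, Z ω)) 2 μ ∧
        0 < ProbabilityTheory.variance (fun ω => f (X ω, Z ω) -
          (μ[(fun ω' => f (X ω', Z ω')) | MeasurableSpace.comap Z MeasurableSpace.pi]) ω) μ ∧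
        0 < ProbabilityTheory.variance (fun ω => g (Y ω, Z ω) -
          (μ[(fun ω' => g (Y ω', Z ω')) | MeasurableSpace.comap Z MeasurableSpace.pi]) ω) μ ∧
        r = corrSq μ
          (fun ω => f (X ω, Z ω) -
            (μ[(fun ω' => f (X ω', Z ω')) | MeasurableSpace.comap Z MeasurableSpace.pi]) ω)
          (fun ω => g (Y ω, Z ω) -
            (μ[(fun ω' => g (Y ω', Z ω')) | MeasurableSpace.comap Z MeasurableSpace.pi]) ω)}) :
    (0 ≤ S ∧ S ≤ 1) ∧
      (S = 0 ↔ CondIndepFun (MeasurableSpace.comap Z MeasurableSpace.pi)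
        (measurable_iff_comap_le.mp hZ) X Y μ) := by
  rename_i mΩinst _ _ _
  have hmZ : MeasurableSpace.comap Z MeasurableSpace.pi ≤ _ := measurable_iff_comap_le.mp hZ
  set mZ := MeasurableSpace.comap Z MeasurableSpace.pi with hmZdef
  letI : MeasurableSpace Ω := mΩinst
  set 𝓢 := {r : ℝ |
      ∃ (f : (Fin dX → ℝ) × (Fin dZ → ℝ) → ℝ) (g : (Fin dY → ℝ) × (Fin dZ → ℝ) → ℝ),
        Measurable f ∧ Measurable g ∧
        MemLp (fun ω => f (X ω, Z ω)) 2 μ ∧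
        MemLp (fun ω => g (Y ω, Z ω)) 2 μ ∧
        0 < ProbabilityTheory.variance (fun ω => f (X ω, Z ω) -
          (μ[(fun ω' => f (X ω', Z ω')) | mZ]) ω) μ ∧
        0 < ProbabilityTheory.variance (fun ω => g (Y ω, Z ω) -
          (μ[(fun ω' => g (Y ω', Z ω')) | mZ]) ω) μ ∧
        r = corrSq μ
          (fun ω => f (X ω, Z ω) - (μ[(fun ω' => f (X ω', Z ω')) | mZ]) ω)
          (fun ω => g (Y ω, Z ω) - (μ[(fun ω' => g (Y ω', Z ω')) | mZ]) ω)} with h𝓢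
  -- generic facts about centered variables
  have hcenter : ∀ {W : Ω → ℝ}, MemLp W 2 μ →
      MemLp (fun ω => W ω - (μ[W|mZ]) ω) 2 μ
      ∧ (∫ ω, (W ω - (μ[W|mZ]) ω) ∂μ) = 0
      ∧ variance (fun ω => W ω - (μ[W|mZ]) ω) μ
          = ∫ ω, (W ω - (μ[W|mZ]) ω)^2 ∂μ := by
    intro W hW
    have h2 : MemLp (fun ω => W ω - (μ[W|mZ]) ω) 2 μ := hW.sub (myMemL2Condexp hmZ hW)
    have h0 : (∫ ω, (W ω - (μ[W|mZ]) ω) ∂μ) = 0 := myMeanZero hmZ hW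
    refine ⟨h2, h0, ?_⟩
    rw [variance_eq_sub h2]
    simp only [Pi.pow_apply]
    rw [h0]
    simp
  -- corrSq rewriting
  have hcorr : ∀ {u v : Ω → ℝ}, (∫ ω, u ω ∂μ) = 0 → (∫ ω, v ω ∂μ) = 0 →
      corrSq μ u v = (∫ ω, u ω * v ω ∂μ)^2 / (variance u μ * variance v μ) := by
    intro u v hu hv
    unfold corrSq
    rw [hu, hv]
    simp only [sub_zero]
  have hmem : ∀ r ∈ 𝓢, 0 ≤ r ∧ r ≤ 1 := by
    rintro r ⟨f, g, hf, hg, hf2, hg2, hvu, hvv, rfl⟩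
    obtain ⟨hu2, hu0, huvar⟩ := hcenter hf2
    obtain ⟨hv2, hv0, hvvar⟩ := hcenter hg2
    rw [hcorr hu0 hv0]
    constructor
    · exact div_nonneg (sq_nonneg _) (mul_nonneg (variance_nonneg _ _) (variance_nonneg _ _))
    · rw [div_le_one (mul_pos hvu hvv), huvar, hvvar]
      exact myCS hu2 hv2
  have hS0 : 0 ≤ S := by
    rw [hS]; exact Real.sSup_nonneg fun r hr => (hmem r hr).1
  have hS1 : S ≤ 1 := by
    rw [hS]; exact Real.sSup_le (fun r hr => (hmem r hr).2) zero_le_one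
  refine ⟨⟨hS0, hS1⟩, ?_, ?_⟩
  · -- S = 0 → conditional independence
    intro hSeq
    have hBdd : BddAbove 𝓢 := ⟨1, fun r hr => (hmem r hr).2⟩
    have hall0 : ∀ r ∈ 𝓢, r = 0 := by
      intro r hr
      have h1 := le_csSup hBdd hr
      rw [← hS, hSeq] at h1
      exact le_antisymm h1 (hmem r hr).1
    have hcov : ∀ (f : (Fin dX → ℝ) × (Fin dZ → ℝ) → ℝ) (g : (Fin dY → ℝ) × (Fin dZ → ℝ) → ℝ),
        Measurable f → Measurable g →
        MemLp (fun ω => f (X ω, Z ω)) 2 μ → MemLp (fun ω => g (Y ω, Z ω)) 2 μ →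
        ∫ ω, (f (X ω, Z ω) - (μ[(fun ω' => f (X ω', Z ω'))|mZ]) ω)
            * (g (Y ω, Z ω) - (μ[(fun ω' => g (Y ω', Z ω'))|mZ]) ω) ∂μ = 0 := by
      intro f g hf hg hf2 hg2
      set u := fun ω => f (X ω, Z ω) - (μ[(fun ω' => f (X ω', Z ω'))|mZ]) ω with hudef
      set v := fun ω => g (Y ω, Z ω) - (μ[(fun ω' => g (Y ω', Z ω'))|mZ]) ω with hvdef
      obtain ⟨hu2', hu0', huvar'⟩ := hcenter hf2
      obtain ⟨hv2', hv0', hvvar'⟩ := hcenter hg2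
      have hu2 : MemLp u 2 μ := hu2'
      have hv2 : MemLp v 2 μ := hv2'
      have hu0 : (∫ ω, u ω ∂μ) = 0 := hu0'
      have hv0 : (∫ ω, v ω ∂μ) = 0 := hv0'
      have huvar : variance u μ = ∫ ω, (u ω)^2 ∂μ := huvar'
      have hvvar : variance v μ = ∫ ω, (v ω)^2 ∂μ := hvvar'
      have hzmul : ∀ {w w' : Ω → ℝ}, MemLp w 2 μ → variance w μ = ∫ ω, (w ω)^2 ∂μ →
          variance w μ = 0 → (∀ ω, w ω * w' ω = w' ω * w ω) →
          ∫ ω, w ω * w' ω ∂μ = 0 := by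
        intro w w' hw2 hwvar hw0 _
        have hsq : (∫ ω, (w ω)^2 ∂μ) = 0 := by rw [← hwvar, hw0]
        have hz : ∀ᵐ ω ∂μ, w ω = 0 := by
          have h := (integral_eq_zero_iff_of_nonneg (fun ω => sq_nonneg (w ω))
            hw2.integrable_sq).mp hsq
          filter_upwards [h] with ω hω
          exact (pow_eq_zero_iff two_ne_zero).mp hω
        have : (fun ω => w ω * w' ω) =ᵐ[μ] (fun _ => (0:ℝ)) := by
          filter_upwards [hz] with ω hω
          rw [hω, zero_mul]
        rw [integral_congr_ae this, integral_zero]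
      by_cases hvaru : variance u μ = 0
      · exact hzmul hu2 huvar hvaru (fun ω => mul_comm _ _)
      by_cases hvarv : variance v μ = 0
      · have h := hzmul hv2 hvvar hvarv (fun ω => mul_comm _ _) (w' := u)
        calc ∫ ω, u ω * v ω ∂μ = ∫ ω, v ω * u ω ∂μ := by simp_rw [mul_comm]
          _ = 0 := h
      · have hvu' : 0 < variance u μ := lt_of_le_of_ne (variance_nonneg _ _) (Ne.symm hvaru)
        have hvv' : 0 < variance v μ := lt_of_le_of_ne (variance_nonneg _ _) (Ne.symm hvarv)
        have hrmem : corrSq μ u v ∈ 𝓢 := ⟨f, g, hf, hg, hf2, hg2, hvu', hvv', rfl⟩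
        have h0 := hall0 _ hrmem
        rw [hcorr hu0 hv0] at h0
        have hden : variance u μ * variance v μ ≠ 0 := (mul_pos hvu' hvv').ne'
        have hnum := (div_eq_zero_iff.mp h0).resolve_right hden
        exact (pow_eq_zero_iff two_ne_zero).mp hnum
    rw [condIndepFun_iff_condExp_inter_preimage_eq_mul hX hY]
    intro s t hs ht
    have hXs : MeasurableSet (X ⁻¹' s) := hX hs
    have hYt : MeasurableSet (Y ⁻¹' t) := hY ht
    have key : ∀ C : Set (Fin dZ → ℝ), MeasurableSet C →
        ∫ ω in Z ⁻¹' C, (μ[(X ⁻¹' s).indicator (fun _ => (1:ℝ))|mZ]) ω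
            * (μ[(Y ⁻¹' t).indicator (fun _ => (1:ℝ))|mZ]) ω ∂μ
          = (μ (X ⁻¹' s ∩ Y ⁻¹' t ∩ Z ⁻¹' C)).toReal := by
      intro C hC
      have hfm : Measurable (fun p : (Fin dX → ℝ) × (Fin dZ → ℝ) =>
          s.indicator (fun _ => (1:ℝ)) p.1 * C.indicator (fun _ => (1:ℝ)) p.2) :=
        ((measurable_const.indicator hs).comp measurable_fst).mul
          ((measurable_const.indicator hC).comp measurable_snd)
      have hgm : Measurable (fun p : (Fin dY → ℝ) × (Fin dZ → ℝ) =>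
          t.indicator (fun _ => (1:ℝ)) p.1) :=
        (measurable_const.indicator ht).comp measurable_fst
      have hFeq : (fun ω => s.indicator (fun _ => (1:ℝ)) (X ω)
            * C.indicator (fun _ => (1:ℝ)) (Z ω))
          = ((Z ⁻¹' C) ∩ (X ⁻¹' s)).indicator (fun _ => (1:ℝ)) := by
        funext ω
        by_cases h1 : X ω ∈ s <;> by_cases h2 : Z ω ∈ C <;>
          simp [Set.indicator_apply, h1, h2]
      have hGeq : (fun ω => t.indicator (fun _ => (1:ℝ)) (Y ω))
          = (Y ⁻¹' t).indicator (fun _ => (1:ℝ)) := by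
        funext ω
        by_cases h1 : Y ω ∈ t <;> simp [Set.indicator_apply, h1]
      have hf2 : MemLp (fun ω => s.indicator (fun _ => (1:ℝ)) (X ω)
          * C.indicator (fun _ => (1:ℝ)) (Z ω)) 2 μ := by
        rw [hFeq]
        exact memLp_indicator_const 2 ((hZ hC).inter hXs) 1 (Or.inr (measure_ne_top μ _))
      have hg2 : MemLp (fun ω => t.indicator (fun _ => (1:ℝ)) (Y ω)) 2 μ := by
        rw [hGeq]
        exact memLp_indicator_const 2 hYt 1 (Or.inr (measure_ne_top μ _))
      have hc : ∫ ω, ((fun ω' => s.indicator (fun _ => (1:ℝ)) (X ω')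
            * C.indicator (fun _ => (1:ℝ)) (Z ω')) ω
          - (μ[(fun ω' => s.indicator (fun _ => (1:ℝ)) (X ω')
            * C.indicator (fun _ => (1:ℝ)) (Z ω'))|mZ]) ω)
          * ((fun ω' => t.indicator (fun _ => (1:ℝ)) (Y ω')) ω
          - (μ[(fun ω' => t.indicator (fun _ => (1:ℝ)) (Y ω'))|mZ]) ω) ∂μ = 0 :=
        hcov _ _ hfm hgm hf2 hg2
      have hzero2 : (∫ ω, (s.indicator (fun _ => (1:ℝ)) (X ω)
            * C.indicator (fun _ => (1:ℝ)) (Z ω)) * (t.indicator (fun _ => (1:ℝ)) (Y ω)) ∂μ)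
          - (∫ ω, (μ[(fun ω' => s.indicator (fun _ => (1:ℝ)) (X ω')
              * C.indicator (fun _ => (1:ℝ)) (Z ω'))|mZ]) ω
            * (μ[(fun ω' => t.indicator (fun _ => (1:ℝ)) (Y ω'))|mZ]) ω ∂μ) = 0 := by
        rw [← myCovEq hmZ hf2 hg2]
        exact hc
      have hL : ∫ ω, (s.indicator (fun _ => (1:ℝ)) (X ω)
            * C.indicator (fun _ => (1:ℝ)) (Z ω)) * (t.indicator (fun _ => (1:ℝ)) (Y ω)) ∂μ
          = (μ (X ⁻¹' s ∩ Y ⁻¹' t ∩ Z ⁻¹' C)).toReal := by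
        have e : ∀ ω, (s.indicator (fun _ => (1:ℝ)) (X ω) * C.indicator (fun _ => (1:ℝ)) (Z ω))
              * (t.indicator (fun _ => (1:ℝ)) (Y ω))
            = (X ⁻¹' s ∩ Y ⁻¹' t ∩ Z ⁻¹' C).indicator (fun _ => (1:ℝ)) ω := by
          intro ω
          by_cases h1 : X ω ∈ s <;> by_cases h2 : Z ω ∈ C <;> by_cases h3 : Y ω ∈ t <;>
            simp [Set.indicator_apply, h1, h2, h3]
        simp_rw [e]
        rw [myIndicatorIntegral μ ((hXs.inter hYt).inter (hZ hC)) 1, mul_one]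
      have hpull1 : μ[(fun ω => s.indicator (fun _ => (1:ℝ)) (X ω)
            * C.indicator (fun _ => (1:ℝ)) (Z ω))|mZ]
          =ᵐ[μ] fun ω => (Z ⁻¹' C).indicator (fun _ => (1:ℝ)) ω
            * (μ[(X ⁻¹' s).indicator (fun _ => (1:ℝ))|mZ]) ω := by
        rw [hFeq]
        exact myPullOut hmZ ⟨C, hC, rfl⟩ hXs
      have hR : ∫ ω, (μ[(fun ω' => s.indicator (fun _ => (1:ℝ)) (X ω')
              * C.indicator (fun _ => (1:ℝ)) (Z ω'))|mZ]) ω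
            * (μ[(fun ω' => t.indicator (fun _ => (1:ℝ)) (Y ω'))|mZ]) ω ∂μ
          = ∫ ω in Z ⁻¹' C, (μ[(X ⁻¹' s).indicator (fun _ => (1:ℝ))|mZ]) ω
            * (μ[(Y ⁻¹' t).indicator (fun _ => (1:ℝ))|mZ]) ω ∂μ := by
        have hpull2 : μ[(fun ω' => t.indicator (fun _ => (1:ℝ)) (Y ω'))|mZ]
            =ᵐ[μ] μ[(Y ⁻¹' t).indicator (fun _ => (1:ℝ))|mZ] := by rw [hGeq]
        erw [integral_congr_ae ((hpull1.mul hpull2) :)]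
        have e : ∀ ω, (Z ⁻¹' C).indicator (fun _ => (1:ℝ)) ω
              * (μ[(X ⁻¹' s).indicator (fun _ => (1:ℝ))|mZ]) ω
              * (μ[(Y ⁻¹' t).indicator (fun _ => (1:ℝ))|mZ]) ω
            = (Z ⁻¹' C).indicator (fun ω' => (μ[(X ⁻¹' s).indicator (fun _ => (1:ℝ))|mZ]) ω'
              * (μ[(Y ⁻¹' t).indicator (fun _ => (1:ℝ))|mZ]) ω') ω := by
          intro ω
          by_cases h2 : Z ω ∈ C <;> simp [Set.indicator_apply, h2]
        simp_rw [Pi.mul_apply, e]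
        rw [integral_indicator (hZ hC)]
      rw [← hR, ← hL]
      linarith [hzero2]
    have hg_int : Integrable (fun ω => (μ[(X ⁻¹' s).indicator (fun _ => (1:ℝ))|mZ]) ω
        * (μ[(Y ⁻¹' t).indicator (fun _ => (1:ℝ))|mZ]) ω) μ :=
      myIntegrableMul (myMemL2Condexp hmZ (memLp_indicator_const 2 hXs 1
          (Or.inr (measure_ne_top μ _))))
        (myMemL2Condexp hmZ (memLp_indicator_const 2 hYt 1 (Or.inr (measure_ne_top μ _))))
    have main := ae_eq_condExp_of_forall_setIntegral_eq hmZ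
      (f := (X ⁻¹' s ∩ Y ⁻¹' t).indicator (fun _ => (1:ℝ)))
      (g := fun ω => (μ[(X ⁻¹' s).indicator (fun _ => (1:ℝ))|mZ]) ω
        * (μ[(Y ⁻¹' t).indicator (fun _ => (1:ℝ))|mZ]) ω)
      ((integrable_const (1:ℝ)).indicator (hXs.inter hYt))
      (fun s' _ _ => hg_int.integrableOn)
      (fun s' hs' _ => by
        obtain ⟨C, hC, rfl⟩ := hs'
        rw [key C hC, setIntegral_indicator (hXs.inter hYt), setIntegral_const, smul_eq_mul,
          mul_one]
        congr 1
        rw [Set.inter_comm])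
      ((stronglyMeasurable_condExp.mul stronglyMeasurable_condExp).aestronglyMeasurable)
    exact main.symm
  · -- conditional independence → S = 0
    intro hCI
    have hXle : MeasurableSpace.comap X MeasurableSpace.pi ≤ _ := hX.comap_le
    have hYle : MeasurableSpace.comap Y MeasurableSpace.pi ≤ _ := hY.comap_le
    set m₁ := MeasurableSpace.comap (fun ω => (X ω, Z ω)) inferInstance with hm1def
    set m₂ := MeasurableSpace.comap (fun ω => (Y ω, Z ω)) inferInstance with hm2def
    letI : MeasurableSpace Ω := mΩinst
    have hm1le : m₁ ≤ mΩinst := (hX.prodMk hZ).comap_le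
    have hm2le : m₂ ≤ mΩinst := (hY.prodMk hZ).comap_le
    set p₁ := {u : Set Ω | ∃ a, MeasurableSet[MeasurableSpace.comap X MeasurableSpace.pi] a ∧
      ∃ b, MeasurableSet[mZ] b ∧ u = a ∩ b} with hp1def
    set p₂ := {u : Set Ω | ∃ a, MeasurableSet[MeasurableSpace.comap Y MeasurableSpace.pi] a ∧
      ∃ b, MeasurableSet[mZ] b ∧ u = a ∩ b} with hp2def
    have hgen1 : m₁ = MeasurableSpace.generateFrom p₁ := by
      rw [hm1def, show (inferInstance : MeasurableSpace ((Fin dX → ℝ) × (Fin dZ → ℝ)))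
          = MeasurableSpace.comap Prod.fst MeasurableSpace.pi
            ⊔ MeasurableSpace.comap Prod.snd MeasurableSpace.pi from rfl,
        MeasurableSpace.comap_sup, MeasurableSpace.comap_comp, MeasurableSpace.comap_comp]
      have : MeasurableSpace.comap (Prod.fst ∘ fun ω => (X ω, Z ω)) MeasurableSpace.pi
          = MeasurableSpace.comap X MeasurableSpace.pi := rfl
      rw [this]
      have : MeasurableSpace.comap (Prod.snd ∘ fun ω => (X ω, Z ω)) MeasurableSpace.pi = mZ := rfl
      rw [this]
      refine le_antisymm (sup_le ?_ ?_) (MeasurableSpace.generateFrom_le ?_)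
      · intro u hu
        exact MeasurableSpace.measurableSet_generateFrom
          ⟨u, hu, Set.univ, MeasurableSet.univ, (Set.inter_univ u).symm⟩
      · intro u hu
        exact MeasurableSpace.measurableSet_generateFrom
          ⟨Set.univ, MeasurableSet.univ, u, hu, (Set.univ_inter u).symm⟩
      · rintro u ⟨a, ha, b, hb, rfl⟩
        exact ((le_sup_left (a := MeasurableSpace.comap X MeasurableSpace.pi) (b := mZ)) a
          ha).inter ((le_sup_right (a := MeasurableSpace.comap X MeasurableSpace.pi)
            (b := mZ)) b hb)
    have hgen2 : m₂ = MeasurableSpace.generateFrom p₂ := by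
      rw [hm2def, show (inferInstance : MeasurableSpace ((Fin dY → ℝ) × (Fin dZ → ℝ)))
          = MeasurableSpace.comap Prod.fst MeasurableSpace.pi
            ⊔ MeasurableSpace.comap Prod.snd MeasurableSpace.pi from rfl,
        MeasurableSpace.comap_sup, MeasurableSpace.comap_comp, MeasurableSpace.comap_comp]
      have : MeasurableSpace.comap (Prod.fst ∘ fun ω => (Y ω, Z ω)) MeasurableSpace.pi
          = MeasurableSpace.comap Y MeasurableSpace.pi := rfl
      rw [this]
      have : MeasurableSpace.comap (Prod.snd ∘ fun ω => (Y ω, Z ω)) MeasurableSpace.pi = mZ := rfl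
      rw [this]
      refine le_antisymm (sup_le ?_ ?_) (MeasurableSpace.generateFrom_le ?_)
      · intro u hu
        exact MeasurableSpace.measurableSet_generateFrom
          ⟨u, hu, Set.univ, MeasurableSet.univ, (Set.inter_univ u).symm⟩
      · intro u hu
        exact MeasurableSpace.measurableSet_generateFrom
          ⟨Set.univ, MeasurableSet.univ, u, hu, (Set.univ_inter u).symm⟩
      · rintro u ⟨a, ha, b, hb, rfl⟩
        exact ((le_sup_left (a := MeasurableSpace.comap Y MeasurableSpace.pi) (b := mZ)) a
          ha).inter ((le_sup_right (a := MeasurableSpace.comap Y MeasurableSpace.pi)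
            (b := mZ)) b hb)
    have hpi1 : IsPiSystem p₁ := by
      rintro u ⟨a, ha, b, hb, rfl⟩ v ⟨a', ha', b', hb', rfl⟩ _
      exact ⟨a ∩ a', ha.inter ha', b ∩ b', hb.inter hb', by
        ext ω; simp only [Set.mem_inter_iff]; tauto⟩
    have hpi2 : IsPiSystem p₂ := by
      rintro u ⟨a, ha, b, hb, rfl⟩ v ⟨a', ha', b', hb', rfl⟩ _
      exact ⟨a ∩ a', ha.inter ha', b ∩ b', hb.inter hb', by
        ext ω; simp only [Set.mem_inter_iff]; tauto⟩
    have hmeas1 : ∀ u ∈ p₁, MeasurableSet u := by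
      rintro u ⟨a, ha, b, hb, rfl⟩
      exact (hXle a ha).inter (hmZ b hb)
    have hmeas2 : ∀ u ∈ p₂, MeasurableSet u := by
      rintro u ⟨a, ha, b, hb, rfl⟩
      exact (hYle a ha).inter (hmZ b hb)
    have hCIiff := (condIndepFun_iff mZ (measurable_iff_comap_le.mp hZ) X Y hX hY μ).mp hCI
    have hbase : ∀ (a b c d : Set Ω),
        MeasurableSet[MeasurableSpace.comap X MeasurableSpace.pi] a →
        MeasurableSet[mZ] b → MeasurableSet[MeasurableSpace.comap Y MeasurableSpace.pi] c →
        MeasurableSet[mZ] d →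
        (μ[((a ∩ b) ∩ (c ∩ d)).indicator (fun _ => (1:ℝ))|mZ]) =ᵐ[μ]
          (μ[(a ∩ b).indicator (fun _ => (1:ℝ))|mZ])
            * (μ[(c ∩ d).indicator (fun _ => (1:ℝ))|mZ]) := by
      intro a b c d ha hb hc hd
      have e1 : (a ∩ b) ∩ (c ∩ d) = (b ∩ d) ∩ (a ∩ c) := by
        ext ω; simp only [Set.mem_inter_iff]; tauto
      have e2 : a ∩ b = b ∩ a := Set.inter_comm _ _
      have e3 : c ∩ d = d ∩ c := Set.inter_comm _ _
      rw [e1, e2, e3]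
      have h1 := myPullOut (μ := μ) hmZ (hb.inter hd) ((hXle a ha).inter (hYle c hc))
      have h2 := myPullOut (μ := μ) hmZ hb (hXle a ha)
      have h3 := myPullOut (μ := μ) hmZ hd (hYle c hc)
      have h4 := hCIiff a c ha hc
      filter_upwards [h1, h2, h3, h4] with ω hω1 hω2 hω3 hω4
      rw [Pi.mul_apply, hω2, hω3, hω1, hω4, Pi.mul_apply]
      by_cases h5 : ω ∈ b <;> by_cases h6 : ω ∈ d <;>
        simp [Set.indicator_apply, h5, h6] <;> ring
    have hCondIndep : CondIndep mZ m₁ m₂ (measurable_iff_comap_le.mp hZ) μ := by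
      have hIndepSets : CondIndepSets mZ (measurable_iff_comap_le.mp hZ) p₁ p₂ μ := by
        refine (condIndepSets_iff mZ (measurable_iff_comap_le.mp hZ) p₁ p₂ hmeas1 hmeas2 μ).mpr ?_
        rintro u v ⟨a, ha, b, hb, rfl⟩ ⟨c, hc, d, hd, rfl⟩
        exact hbase a b c d ha hb hc hd
      exact Kernel.IndepSets.indep hm1le hm2le hpi1 hpi2 hgen1 hgen2 hIndepSets
    have hprodm := (condIndep_iff mZ m₁ m₂ (measurable_iff_comap_le.mp hZ) hm1le hm2le μ).mp
      hCondIndep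
    have hzero : ∀ r ∈ 𝓢, r = 0 := by
      rintro r ⟨f, g, hf, hg, hf2, hg2, hvu, hvv, rfl⟩
      set u := fun ω => f (X ω, Z ω) - (μ[(fun ω' => f (X ω', Z ω'))|mZ]) ω with hudef
      set v := fun ω => g (Y ω, Z ω) - (μ[(fun ω' => g (Y ω', Z ω'))|mZ]) ω with hvdef
      obtain ⟨hu2', hu0', _⟩ := hcenter hf2
      obtain ⟨hv2', hv0', _⟩ := hcenter hg2
      have hu0 : (∫ ω, u ω ∂μ) = 0 := hu0'
      have hv0 : (∫ ω, v ω ∂μ) = 0 := hv0'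
      have hFm : AEStronglyMeasurable[m₁] (fun ω => f (X ω, Z ω)) μ := by
        refine StronglyMeasurable.aestronglyMeasurable (Measurable.stronglyMeasurable ?_)
        exact hf.comp (measurable_iff_comap_le.mpr le_rfl)
      have hGm : AEStronglyMeasurable[m₂] (fun ω => g (Y ω, Z ω)) μ := by
        refine StronglyMeasurable.aestronglyMeasurable (Measurable.stronglyMeasurable ?_)
        exact hg.comp (measurable_iff_comap_le.mpr le_rfl)
      have hEq := myProdIdentity hmZ hm1le hm2le hprodm hf2 hg2 hFm hGm
      have hcov0 : (∫ ω, u ω * v ω ∂μ) = 0 := by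
        have := myCovEq hmZ hf2 hg2
        rw [hEq, sub_self] at this
        exact this
      rw [hcorr hu0 hv0, hcov0]
      norm_num
    refine le_antisymm ?_ hS0
    rw [hS]
    exact Real.sSup_le (fun r hr => (hzero r hr).le) le_rfl
end

section
/- Let X, Z be random variables taking values in ℝ^{d_X}, ℝ^{d_Z}, let (x_i, z_i), i = 1, …, n, be i.i.d. copies of (X,Z), and assume conditions (C1)–(C4) hold for the parametrized families f_θ (θ ∈ Θ) and h_ω (ω ∈ Ω). Let ω̂(θ) = argmin_{ω ∈ Ω} (1/n) Σ_i (f_θ(x_i,z_i) − h_ω(z_i))² be the empirical least-squares minimizer. Then sup over θ ∈ Θ of | (1/n) Σ_{i=1}^n (f_θ(x_i,z_i) − h_{ω̂(θ)}(z_i))² − E[(f_θ(X,Z) − h_{ω*(θ)}(Z))²] | converges to 0 in probability as n → ∞. -/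
open MeasureTheory ProbabilityTheory Filter
open Set Metric Topology

lemma ciSup_dense_eq {K : Type*} [TopologicalSpace K] [Nonempty K] {D : Set K} (hD : Dense D)
    {φ : K → ℝ} (hφ : Continuous φ) (hbdd : BddAbove (Set.range φ)) :
    ⨆ k, φ k = ⨆ d : D, φ (d : K) := by
  have hDne : D.Nonempty := hD.nonempty
  haveI : Nonempty D := hDne.to_subtype
  have hbdd' : BddAbove (φ '' D) := hbdd.mono (Set.image_subset_range _ _)
  have him : φ '' D = Set.range fun d : D => φ (d : K) := (Set.image_eq_range _ _)
  apply le_antisymm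
  · refine ciSup_le fun k => ?_
    have h1 : φ k ∈ closure (φ '' D) :=
      image_closure_subset_closure_image hφ ⟨k, hD k, rfl⟩
    have h2 : closure (φ '' D) ⊆ Set.Iic (sSup (φ '' D)) :=
      closure_minimal (fun x hx => le_csSup hbdd' hx) isClosed_Iic
    have h3 : φ k ≤ sSup (φ '' D) := h2 h1
    rwa [him] at h3
  · exact ciSup_le fun d => le_ciSup hbdd (d : K)

lemma ulln_half {α K E : Type*} [MeasurableSpace α] {μ : Measure α} [IsProbabilityMeasure μ]
    [MetricSpace K] [CompactSpace K] [Nonempty K]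
    [MetricSpace E] [MeasurableSpace E] [BorelSpace E]
    (φ : K → E → ℝ) (hφ : Continuous fun p : K × E => φ p.1 p.2)
    (ν : Measure E) [IsProbabilityMeasure ν]
    (G : E → ℝ) (hGint : Integrable G ν) (hdom : ∀ k w, |φ k w| ≤ G w)
    (W : ℕ → α → E) (hWmeas : ∀ i, Measurable (W i))
    (hWlaw : ∀ i, μ.map (W i) = ν)
    (hWindep : iIndepFun W μ)
    {ε : ℝ} (hε : 0 < ε) :
    ∀ᵐ a ∂μ, ∀ᶠ n : ℕ in atTop, ∀ k : K,
      (∑ i ∈ Finset.range n, φ k (W i a)) / n - ∫ w, φ k w ∂ν < ε := by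
  have hφk : ∀ w, Continuous fun k => φ k w :=
    fun w => hφ.comp (continuous_id.prodMk continuous_const)
  have hφw : ∀ k, Continuous fun w => φ k w :=
    fun k => hφ.comp (continuous_const.prodMk continuous_id)
  set g : K → ℝ := fun k => ∫ w, φ k w ∂ν with hgdef
  have hgcont : Continuous g :=
    continuous_of_dominated (fun k => (hφw k).measurable.aestronglyMeasurable)
      (fun k => Eventually.of_forall fun w => by
        simpa [Real.norm_eq_abs] using hdom k w)
      hGint (Eventually.of_forall fun w => hφk w)
  have hrpos : ∀ m : ℕ, (0:ℝ) < 1 / (m + 1) := fun m => by positivity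
  set up : K → ℕ → E → ℝ :=
    fun k₀ m w => ⨆ k : closedBall k₀ (1/((m:ℝ)+1)), φ (k : K) w with hupdef
  have hmem : ∀ (k₀ : K) (m : ℕ), k₀ ∈ closedBall k₀ (1/((m:ℝ)+1)) :=
    fun k₀ m => mem_closedBall_self (hrpos m).le
  have hbdd : ∀ (k₀ : K) (m : ℕ) (w : E),
      BddAbove (Set.range fun k : closedBall k₀ (1/((m:ℝ)+1)) => φ (k : K) w) := by
    intro k₀ m w
    refine ⟨G w, ?_⟩
    rintro x ⟨k, rfl⟩
    exact (abs_le.1 (hdom _ w)).2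
  have hle : ∀ (k₀ : K) (m : ℕ) (w : E) (k : K), k ∈ closedBall k₀ (1/((m:ℝ)+1)) →
      φ k w ≤ up k₀ m w := by
    intro k₀ m w k hk
    exact le_ciSup (hbdd k₀ m w) (⟨k, hk⟩ : closedBall k₀ (1/((m:ℝ)+1)))
  have habs : ∀ (k₀ : K) m w, |up k₀ m w| ≤ G w := by
    intro k₀ m w
    haveI : Nonempty ↥(closedBall k₀ (1/((m:ℝ)+1))) := ⟨⟨k₀, hmem k₀ m⟩⟩
    rw [abs_le]
    refine ⟨le_trans (abs_le.1 (hdom k₀ w)).1 (hle k₀ m w k₀ (hmem k₀ m)), ?_⟩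
    exact ciSup_le fun k => (abs_le.1 (hdom _ w)).2
  -- measurability of up
  have hupmeas : ∀ (k₀ : K) m, Measurable (up k₀ m) := by
    intro k₀ m
    set C := closedBall k₀ (1/((m:ℝ)+1)) with hC
    haveI : Nonempty C := ⟨⟨k₀, hmem k₀ m⟩⟩
    obtain ⟨D, hDc, hDd⟩ := TopologicalSpace.exists_countable_dense ↥C
    haveI := hDc.to_subtype
    have hrw : up k₀ m = fun w => ⨆ d : D, φ ((d : ↥C) : K) w := by
      funext w
      exact ciSup_dense_eq hDd ((hφk w).comp continuous_subtype_val) (hbdd k₀ m w)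
    rw [hrw]
    exact Measurable.iSup fun d => (hφw _).measurable
  -- integrability of up
  have hupint : ∀ (k₀ : K) m, Integrable (up k₀ m) ν := by
    intro k₀ m
    exact hGint.mono' (hupmeas k₀ m).aestronglyMeasurable
      (Eventually.of_forall fun w => by simpa [Real.norm_eq_abs] using habs k₀ m w)
  -- pointwise convergence of up as m → ∞
  have hlim : ∀ (k₀ : K) w, Tendsto (fun m => up k₀ m w) atTop (𝓝 (φ k₀ w)) := by
    intro k₀ w
    rw [Metric.tendsto_atTop]
    intro ε' hε'
    obtain ⟨δ, hδ, hδ'⟩ := Metric.continuousAt_iff.1 ((hφk w).continuousAt (x := k₀))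
      (ε'/2) (by linarith)
    obtain ⟨N, hN⟩ := exists_nat_one_div_lt hδ
    refine ⟨N, fun m hm => ?_⟩
    haveI : Nonempty ↥(closedBall k₀ (1/((m:ℝ)+1))) := ⟨⟨k₀, hmem k₀ m⟩⟩
    have hrm : (1:ℝ)/((m:ℝ)+1) ≤ 1/((N:ℝ)+1) := by
      apply one_div_le_one_div_of_le (by positivity)
      exact_mod_cast add_le_add_left (Nat.cast_le.2 hm) 1
    have hub : up k₀ m w ≤ φ k₀ w + ε'/2 := by
      refine ciSup_le fun k => ?_
      have hk : dist (k : K) k₀ < δ := lt_of_le_of_lt (le_trans k.2 hrm) hN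
      have := hδ' hk
      rw [Real.dist_eq] at this
      linarith [(abs_le.1 this.le).2]
    have hlb : φ k₀ w ≤ up k₀ m w := hle k₀ m w k₀ (hmem k₀ m)
    rw [Real.dist_eq, abs_sub_lt_iff]
    constructor <;> linarith
  -- convergence of integrals
  have hIlim : ∀ k₀ : K, Tendsto (fun m => ∫ w, up k₀ m w ∂ν) atTop (𝓝 (g k₀)) := by
    intro k₀
    exact tendsto_integral_of_dominated_convergence G
      (fun m => (hupmeas k₀ m).aestronglyMeasurable) hGint
      (fun m => Eventually.of_forall fun w => by
        simpa [Real.norm_eq_abs] using habs k₀ m w)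
      (Eventually.of_forall fun w => hlim k₀ w)
  -- choice of radius index for each center
  have hchoice : ∀ k₀ : K, ∃ m : ℕ, (∫ w, up k₀ m w ∂ν) < g k₀ + ε/3 ∧
      ∀ k ∈ closedBall k₀ (1/((m:ℝ)+1)), g k₀ - ε/3 < g k := by
    intro k₀
    have h1 : ∀ᶠ m : ℕ in atTop, (∫ w, up k₀ m w ∂ν) < g k₀ + ε/3 :=
      (hIlim k₀).eventually_lt_const (by linarith)
    obtain ⟨δ, hδ, hδ'⟩ := Metric.continuousAt_iff.1 (hgcont.continuousAt (x := k₀))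
      (ε/3) (by linarith)
    have h2 : ∀ᶠ m : ℕ in atTop, (1:ℝ)/((m:ℝ)+1) < δ :=
      tendsto_one_div_add_atTop_nhds_zero_nat.eventually_lt_const hδ
    obtain ⟨m, hm1, hm2⟩ := (h1.and h2).exists
    refine ⟨m, hm1, fun k hk => ?_⟩
    have := hδ' (lt_of_le_of_lt hk hm2)
    rw [Real.dist_eq] at this
    linarith [(abs_sub_lt_iff.1 this).2]
  choose m hm1 hm2 using hchoice
  -- finite subcover
  have hcov : (Set.univ : Set K) ⊆ ⋃ k₀ : K, ball k₀ (1/((m k₀ : ℝ)+1)) := by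
    intro k _
    exact Set.mem_iUnion.2 ⟨k, mem_ball_self (hrpos (m k))⟩
  obtain ⟨t, ht⟩ := isCompact_univ.elim_finite_subcover
    (fun k₀ : K => ball k₀ (1/((m k₀ : ℝ)+1))) (fun k₀ => isOpen_ball) hcov
  -- LLN for each center in t
  have hLLN : ∀ k₀ : K, ∀ᵐ a ∂μ,
      Tendsto (fun n => (∑ i ∈ Finset.range n, up k₀ (m k₀) (W i a)) / n) atTop
        (𝓝 (∫ w, up k₀ (m k₀) w ∂ν)) := by
    intro k₀
    set u := up k₀ (m k₀) with hu
    have humeas := hupmeas k₀ (m k₀)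
    have huint : Integrable u ν := hupint k₀ (m k₀)
    have hint0 : Integrable (fun a => u (W 0 a)) μ := by
      have : Integrable u (μ.map (W 0)) := by rw [hWlaw 0]; exact huint
      exact (integrable_map_measure humeas.aestronglyMeasurable
        (hWmeas 0).aemeasurable).1 this
    have hindep : Pairwise (Function.onFun (IndepFun · · μ) fun i a => u (W i a)) :=
      fun i j hij => (hWindep.indepFun hij).comp humeas humeas
    have hident : ∀ i, IdentDistrib (fun a => u (W i a)) (fun a => u (W 0 a)) μ μ := by
      intro i
      have hWid : IdentDistrib (W i) (W 0) μ μ :=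
        ⟨(hWmeas i).aemeasurable, (hWmeas 0).aemeasurable, by rw [hWlaw i, hWlaw 0]⟩
      exact hWid.comp humeas
    have := strong_law_ae_real (fun i a => u (W i a)) hint0 hindep hident
    have hEq : (μ[fun a => u (W 0 a)]) = ∫ w, u w ∂ν := by
      rw [← hWlaw 0, integral_map (hWmeas 0).aemeasurable]
      rw [hWlaw 0]
      exact humeas.aestronglyMeasurable
    rwa [hEq] at this
  have hA : ∀ᵐ a ∂μ, ∀ k₀ ∈ t,
      Tendsto (fun n => (∑ i ∈ Finset.range n, up k₀ (m k₀) (W i a)) / n) atTop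
        (𝓝 (∫ w, up k₀ (m k₀) w ∂ν)) :=
    (ae_ball_iff t.countable_toSet).2 fun k₀ _ => hLLN k₀
  filter_upwards [hA] with a ha
  have hev : ∀ᶠ n : ℕ in atTop, ∀ k₀ ∈ t,
      (∑ i ∈ Finset.range n, up k₀ (m k₀) (W i a)) / n < (∫ w, up k₀ (m k₀) w ∂ν) + ε/3 := by
    rw [eventually_all_finset]
    intro k₀ hk₀
    exact (ha k₀ hk₀).eventually_lt_const (by linarith)
  filter_upwards [hev] with n hn
  intro k
  obtain ⟨k₀, hk₀t, hk⟩ : ∃ k₀ ∈ t, k ∈ ball k₀ (1/((m k₀:ℝ)+1)) := by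
    have := ht (Set.mem_univ k)
    simpa using this
  have hkc : k ∈ closedBall k₀ (1/((m k₀:ℝ)+1)) := ball_subset_closedBall hk
  have h1 : (∑ i ∈ Finset.range n, φ k (W i a)) / n ≤
      (∑ i ∈ Finset.range n, up k₀ (m k₀) (W i a)) / n := by
    apply div_le_div_of_nonneg_right ?_ (Nat.cast_nonneg n)
    exact Finset.sum_le_sum fun i _ => hle k₀ (m k₀) (W i a) k hkc
  have h2 := hn k₀ hk₀t
  have h3 := hm1 k₀
  have h4 := hm2 k₀ k hkc
  linarith

lemma ulln {α K E : Type*} [MeasurableSpace α] {μ : Measure α} [IsProbabilityMeasure μ]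
    [MetricSpace K] [CompactSpace K] [Nonempty K]
    [MetricSpace E] [MeasurableSpace E] [BorelSpace E]
    (φ : K → E → ℝ) (hφ : Continuous fun p : K × E => φ p.1 p.2)
    (ν : Measure E) [IsProbabilityMeasure ν]
    (G : E → ℝ) (hGint : Integrable G ν) (hdom : ∀ k w, |φ k w| ≤ G w)
    (W : ℕ → α → E) (hWmeas : ∀ i, Measurable (W i))
    (hWlaw : ∀ i, μ.map (W i) = ν)
    (hWindep : iIndepFun W μ) :
    ∀ᵐ a ∂μ, Tendsto (fun n : ℕ =>
      ⨆ k : K, |(∑ i ∈ Finset.range n, φ k (W i a)) / n - ∫ w, φ k w ∂ν|) atTop (𝓝 0) := by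
  have key : ∀ ε : ℝ, 0 < ε → ∀ᵐ a ∂μ, ∀ᶠ n : ℕ in atTop, ∀ k : K,
      |(∑ i ∈ Finset.range n, φ k (W i a)) / n - ∫ w, φ k w ∂ν| < ε := by
    intro ε hε
    have h1 := ulln_half φ hφ ν G hGint hdom W hWmeas hWlaw hWindep hε
    have h2 := ulln_half (fun k w => -φ k w) (hφ.neg) ν G hGint
      (fun k w => by simpa using hdom k w) W hWmeas hWlaw hWindep hε
    filter_upwards [h1, h2] with a ha1 ha2
    filter_upwards [ha1, ha2] with n hn1 hn2
    intro k
    rw [abs_sub_lt_iff]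
    refine ⟨hn1 k, ?_⟩
    have := hn2 k
    simp only [Finset.sum_neg_distrib, integral_neg, neg_div] at this
    linarith
  have hall : ∀ᵐ a ∂μ, ∀ j : ℕ, ∀ᶠ n : ℕ in atTop, ∀ k : K,
      |(∑ i ∈ Finset.range n, φ k (W i a)) / n - ∫ w, φ k w ∂ν| < 1/((j:ℝ)+1) :=
    ae_all_iff.2 fun j => key _ (by positivity)
  filter_upwards [hall] with a ha
  rw [tendsto_order]
  constructor
  · intro b hb
    refine Eventually.of_forall fun n => lt_of_lt_of_le hb ?_
    exact Real.iSup_nonneg fun k => abs_nonneg _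
  · intro b hb
    obtain ⟨j, hj⟩ := exists_nat_one_div_lt hb
    filter_upwards [ha j] with n hn
    refine lt_of_le_of_lt (ciSup_le fun k => (hn k).le) hj

/-- the sub-σ-algebra generated by the second coordinate -/
def mZ (dX dZ : ℕ) : MeasurableSpace ((Fin dX → ℝ) × (Fin dZ → ℝ)) :=
  MeasurableSpace.comap (fun w : (Fin dX → ℝ) × (Fin dZ → ℝ) => w.2) MeasurableSpace.pi

lemma mZ_le (dX dZ : ℕ) :
    mZ dX dZ ≤ (inferInstance : MeasurableSpace ((Fin dX → ℝ) × (Fin dZ → ℝ))) :=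
  measurable_iff_comap_le.1 measurable_snd

set_option maxHeartbeats 1000000 in
/-- claim (ii) in the proof of Theorem 4.

Under (C1)–(C4) restricted to the families `f_θ` and `h_ω`, with `ω̂(θ)` the empirical
least-squares minimizer computed from an i.i.d. sample `W 0, W 1, …` of `(X, Z)` with
common law `ν`,
`sup_θ |(1/n) ∑_i (f_θ(x_i,z_i) − h_{ω̂(θ)}(z_i))² − E[(f_θ(X,Z) − h_{ω*(θ)}(Z))²]|`
converges to `0` in probability. -/
theorem stmt7
    {α : Type*} [MeasurableSpace α] (μ : Measure α) [IsProbabilityMeasure μ]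
    {dX dZ : ℕ}
    {Θ Ξ : Type*}
    -- (C1) compact (metric) parameter spaces
    [MetricSpace Θ] [CompactSpace Θ] [MetricSpace Ξ] [CompactSpace Ξ]
    (f : Θ → (Fin dX → ℝ) × (Fin dZ → ℝ) → ℝ)
    (h : Ξ → (Fin dZ → ℝ) → ℝ)
    -- (C2) joint continuity in parameter and data
    (hf_cont : Continuous fun p : Θ × ((Fin dX → ℝ) × (Fin dZ → ℝ)) => f p.1 p.2)
    (hh_cont : Continuous fun p : Ξ × (Fin dZ → ℝ) => h p.1 p.2)
    -- the common law `ν` of `(X, Z)` and the i.i.d. sample `W`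
    (ν : Measure ((Fin dX → ℝ) × (Fin dZ → ℝ))) [IsProbabilityMeasure ν]
    (W : ℕ → α → (Fin dX → ℝ) × (Fin dZ → ℝ))
    (hWmeas : ∀ i, Measurable (W i))
    (hWlaw : ∀ i, μ.map (W i) = ν)
    (hWindep : iIndepFun W μ)
    -- (C3) dominated square integrability
    (F : (Fin dX → ℝ) × (Fin dZ → ℝ) → ℝ) (hFmeas : Measurable F)
    (hFdom : ∀ θ p, |f θ p| ≤ F p)
    (hFL2 : MemLp F 2 ν)
    (H : (Fin dZ → ℝ) → ℝ) (hHmeas : Measurable H)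
    (hHdom : ∀ ξ z, |h ξ z| ≤ H z)
    (hHL2 : MemLp (fun w => H w.2) 2 ν)
    -- (C4) existence and uniqueness of the population regression parameter
    (ωstar : Θ → Ξ)
    (hωstar : ∀ θ, ν[(fun w => f θ w) |
        MeasurableSpace.comap (fun w : (Fin dX → ℝ) × (Fin dZ → ℝ) => w.2)
          MeasurableSpace.pi] =ᵐ[ν]
      fun w => h (ωstar θ) w.2)
    (hωstar_uniq : ∀ θ ξ,
      ((fun w : (Fin dX → ℝ) × (Fin dZ → ℝ) => h ξ w.2) =ᵐ[ν]
        fun w => h (ωstar θ) w.2) → ξ = ωstar θ)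
    -- the empirical least-squares minimizer
    (ωhat : ℕ → α → Θ → Ξ)
    (hωhat : ∀ n a θ ξ,
      (∑ i ∈ Finset.range n, (f θ (W i a) - h (ωhat n a θ) ((W i a).2)) ^ 2) / n ≤
        (∑ i ∈ Finset.range n, (f θ (W i a) - h ξ ((W i a).2)) ^ 2) / n) :
    -- conclusion: uniform convergence in probability of the empirical squared residuals
    ∀ ε > (0 : ℝ), Tendsto (fun n => μ {a | ε ≤ ⨆ θ : Θ,
      |(∑ i ∈ Finset.range n, (f θ (W i a) - h (ωhat n a θ) ((W i a).2)) ^ 2) / n -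
        ∫ w, (f θ w - h (ωstar θ) w.2) ^ 2 ∂ν|}) atTop (nhds 0) := by
  intro ε hε
  rcases isEmpty_or_nonempty Θ with hΘ | hΘ
  · -- trivial case: Θ empty, the sup is 0
    have hset : ∀ n : ℕ, {a : α | ε ≤ ⨆ θ : Θ,
        |(∑ i ∈ Finset.range n, (f θ (W i a) - h (ωhat n a θ) ((W i a).2)) ^ 2) / n -
          ∫ w, (f θ w - h (ωstar θ) w.2) ^ 2 ∂ν|} = ∅ := by
      intro n
      ext a
      simp [Real.iSup_of_isEmpty, hε.not_ge]
    simp only [hset, measure_empty]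
    exact tendsto_const_nhds
  -- Θ nonempty; get nonempty Ξ and α
  haveI : Nonempty α := by
    by_contra hne
    rw [not_nonempty_iff] at hne
    have h1 := measure_univ (μ := μ)
    rw [Set.univ_eq_empty_iff.2 hne, measure_empty] at h1
    exact zero_ne_one h1
  obtain ⟨a₀⟩ := ‹Nonempty α›
  haveI := hΘ
  obtain ⟨θ₀⟩ := id hΘ
  haveI : Nonempty Ξ := ⟨ωstar θ₀⟩
  -- abbreviations
  set φ : (Θ × Ξ) → (Fin dX → ℝ) × (Fin dZ → ℝ) → ℝ := fun k w => (f k.1 w - h k.2 w.2) ^ 2 with hφdef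
  have hφcont : Continuous fun p : (Θ × Ξ) × ((Fin dX → ℝ) × (Fin dZ → ℝ)) => φ p.1 p.2 := by
    have c1 : Continuous fun p : (Θ × Ξ) × ((Fin dX → ℝ) × (Fin dZ → ℝ)) => f p.1.1 p.2 :=
      hf_cont.comp' ((continuous_fst.comp' continuous_fst).prodMk continuous_snd)
    have c2 : Continuous fun p : (Θ × Ξ) × ((Fin dX → ℝ) × (Fin dZ → ℝ)) => h p.1.2 p.2.2 :=
      hh_cont.comp' ((continuous_snd.comp' continuous_fst).prodMk
        (continuous_snd.comp' continuous_snd))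
    exact (c1.sub c2).pow 2
  have hφk : ∀ w, Continuous fun k : Θ × Ξ => φ k w :=
    fun w => hφcont.comp (continuous_id.prodMk continuous_const)
  have hφw : ∀ k : Θ × Ξ, Continuous fun w => φ k w :=
    fun k => hφcont.comp (continuous_const.prodMk continuous_id)
  -- envelope functions
  set P : (Fin dX → ℝ) × (Fin dZ → ℝ) → ℝ := fun w => F w + H w.2 with hPdef
  have hF0 : ∀ w, 0 ≤ F w := fun w => (abs_nonneg _).trans (hFdom θ₀ w)
  have hH0 : ∀ z, 0 ≤ H z := fun z => (abs_nonneg _).trans (hHdom (ωstar θ₀) z)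
  have hP0 : ∀ w, 0 ≤ P w := fun w => add_nonneg (hF0 w) (hH0 w.2)
  have hPL2 : MemLp P 2 ν := hFL2.add hHL2
  have hPint : Integrable P ν := hPL2.integrable one_le_two
  have hP2int : Integrable (fun w => P w ^ 2) ν := hPL2.integrable_sq
  have hsubP : ∀ (θ : Θ) (ξ : Ξ) (w : (Fin dX → ℝ) × (Fin dZ → ℝ)), |f θ w - h ξ w.2| ≤ P w := fun θ ξ w =>
    (abs_sub _ _).trans (add_le_add (hFdom θ w) (hHdom ξ w.2))
  set G : (Fin dX → ℝ) × (Fin dZ → ℝ) → ℝ := fun w => P w ^ 2 with hGdef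
  have hGint : Integrable G ν := hP2int
  have hdom : ∀ (k : Θ × Ξ) (w : (Fin dX → ℝ) × (Fin dZ → ℝ)), |φ k w| ≤ G w := by
    intro k w
    show |(f k.1 w - h k.2 w.2) ^ 2| ≤ P w ^ 2
    rw [abs_of_nonneg (sq_nonneg _), ← sq_abs]
    exact pow_le_pow_left₀ (abs_nonneg _) (hsubP k.1 k.2 w) 2
  -- the limiting function
  set g : (Θ × Ξ) → ℝ := fun k => ∫ w, φ k w ∂ν with hgdef
  have hgcont : Continuous g :=
    continuous_of_dominated (fun k => (hφw k).measurable.aestronglyMeasurable)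
      (fun k => Eventually.of_forall fun w => by
        simpa [Real.norm_eq_abs] using hdom k w)
      hGint (Eventually.of_forall fun w => hφk w)
  -- STEP 1: ωstar θ minimizes ξ ↦ g (θ, ξ)
  have gmin : ∀ (θ : Θ) (ξ : Ξ), g (θ, ωstar θ) ≤ g (θ, ξ) := by
    intro θ ξ
    have hm := mZ_le dX dZ
    haveI : IsFiniteMeasure (ν.trim hm) := isFiniteMeasure_trim hm
    have hsnd_m : Measurable[mZ dX dZ] (fun w : (Fin dX → ℝ) × (Fin dZ → ℝ) => w.2) :=
      measurable_iff_comap_le.2 le_rfl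
    have hhc : ∀ ξ' : Ξ, Continuous fun z : Fin dZ → ℝ => h ξ' z :=
      fun ξ' => hh_cont.comp' (continuous_const.prodMk continuous_id)
    have hhm : ∀ ξ' : Ξ, StronglyMeasurable[mZ dX dZ] (fun w : (Fin dX → ℝ) × (Fin dZ → ℝ) => h ξ' w.2) :=
      fun ξ' => (((hhc ξ').measurable.comp hsnd_m : Measurable[mZ dX dZ] _)).stronglyMeasurable
    have hfc : Continuous fun w : (Fin dX → ℝ) × (Fin dZ → ℝ) => f θ w :=
      hf_cont.comp' (continuous_const.prodMk continuous_id)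
    set aa : (Fin dX → ℝ) × (Fin dZ → ℝ) → ℝ := fun w => f θ w - h (ωstar θ) w.2 with haadef
    set u : (Fin dX → ℝ) × (Fin dZ → ℝ) → ℝ := fun w => h (ωstar θ) w.2 - h ξ w.2 with hudef
    have haac : Continuous aa := hfc.sub ((hhc (ωstar θ)).comp' continuous_snd)
    have huc : Continuous u :=
      ((hhc (ωstar θ)).comp' continuous_snd).sub ((hhc ξ).comp' continuous_snd)
    have haabd : ∀ w, |aa w| ≤ P w := hsubP θ (ωstar θ)
    have hubd : ∀ w, |u w| ≤ 2 * P w := by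
      intro w
      have := (abs_sub (h (ωstar θ) w.2) (h ξ w.2)).trans
        (add_le_add (hHdom (ωstar θ) w.2) (hHdom ξ w.2))
      have hHP : H w.2 ≤ P w := le_add_of_nonneg_left (hF0 w)
      calc |u w| ≤ H w.2 + H w.2 := this
        _ ≤ 2 * P w := by linarith
    have hfint : Integrable (fun w => f θ w) ν :=
      hPint.mono' hfc.measurable.aestronglyMeasurable
        (Eventually.of_forall fun w => by
          simpa [Real.norm_eq_abs] using (hFdom θ w).trans (le_add_of_nonneg_right (hH0 w.2)))
    have hhint : ∀ ξ' : Ξ, Integrable (fun w : (Fin dX → ℝ) × (Fin dZ → ℝ) => h ξ' w.2) ν := by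
      intro ξ'
      refine hPint.mono' ((hhc ξ').comp' continuous_snd).measurable.aestronglyMeasurable
        (Eventually.of_forall fun w => ?_)
      simpa [Real.norm_eq_abs] using (hHdom ξ' w.2).trans (le_add_of_nonneg_left (hF0 w))
    have haaint : Integrable aa ν :=
      hPint.mono' haac.measurable.aestronglyMeasurable
        (Eventually.of_forall fun w => by simpa [Real.norm_eq_abs] using haabd w)
    have haa2int : Integrable (fun w => aa w ^ 2) ν := by
      refine hP2int.mono' ((haac.pow 2).measurable.aestronglyMeasurable)
        (Eventually.of_forall fun w => ?_)
      rw [Real.norm_eq_abs, abs_of_nonneg (sq_nonneg _), ← sq_abs]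
      exact pow_le_pow_left₀ (abs_nonneg _) (haabd w) 2
    have hu2int : Integrable (fun w => u w ^ 2) ν := by
      refine (hP2int.const_mul 4).mono' ((huc.pow 2).measurable.aestronglyMeasurable)
        (Eventually.of_forall fun w => ?_)
      rw [Real.norm_eq_abs, abs_of_nonneg (sq_nonneg _), ← sq_abs]
      calc |u w| ^ 2 ≤ (2 * P w) ^ 2 := pow_le_pow_left₀ (abs_nonneg _) (hubd w) 2
        _ = 4 * P w ^ 2 := by ring
    have hauint : Integrable (fun w => u w * aa w) ν := by
      refine (hP2int.const_mul 2).mono' ((huc.mul haac).measurable.aestronglyMeasurable)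
        (Eventually.of_forall fun w => ?_)
      rw [Real.norm_eq_abs, abs_mul]
      calc |u w| * |aa w| ≤ (2 * P w) * P w :=
            mul_le_mul (hubd w) (haabd w) (abs_nonneg _) (by linarith [hP0 w])
        _ = 2 * P w ^ 2 := by ring
    -- conditional expectation of aa is 0
    have h0 : ν[aa|mZ dX dZ] =ᵐ[ν] 0 := by
      have h1 : ν[aa|mZ dX dZ] =ᵐ[ν] ν[fun w => f θ w|mZ dX dZ] - ν[fun w : (Fin dX → ℝ) × (Fin dZ → ℝ) => h (ωstar θ) w.2|mZ dX dZ] :=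
        condExp_sub hfint (hhint (ωstar θ)) (mZ dX dZ)
      have h2 : ν[fun w : (Fin dX → ℝ) × (Fin dZ → ℝ) => h (ωstar θ) w.2|mZ dX dZ] = fun w : (Fin dX → ℝ) × (Fin dZ → ℝ) => h (ωstar θ) w.2 :=
        condExp_of_stronglyMeasurable hm (hhm (ωstar θ)) (hhint (ωstar θ))
      have h3 : ν[fun w => f θ w|mZ dX dZ] =ᵐ[ν] fun w => h (ωstar θ) w.2 := hωstar θ
      filter_upwards [h1, h3] with w hw1 hw3
      simp only [Pi.sub_apply, Pi.zero_apply] at *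
      rw [hw1, h2, hw3]
      ring
    -- pull-out property gives zero cross term
    have hcross : ∫ w, u w * aa w ∂ν = 0 := by
      have hmul : ν[fun w => u w * aa w|mZ dX dZ] =ᵐ[ν] (fun w => u w * (ν[aa|mZ dX dZ]) w) := by
        have := condExp_mul_of_stronglyMeasurable_left ((hhm (ωstar θ)).sub (hhm ξ)) hauint haaint
        filter_upwards [this] with w hw
        exact hw
      have hmul0 : ν[fun w => u w * aa w|mZ dX dZ] =ᵐ[ν] 0 := by
        filter_upwards [hmul, h0] with w hw1 hw2
        rw [hw1]
        simp [hw2]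
      calc ∫ w, u w * aa w ∂ν = ∫ w, (ν[fun w => u w * aa w|mZ dX dZ]) w ∂ν :=
            (integral_condExp hm).symm
        _ = 0 := by
            rw [integral_congr_ae hmul0]
            simp
    -- expand the square
    have hexpand : ∀ w, φ (θ, ξ) w = aa w ^ 2 + (2 * (u w * aa w) + u w ^ 2) := by
      intro w
      simp only [hφdef, haadef, hudef]
      ring
    have hint2 : Integrable (fun w => 2 * (u w * aa w) + u w ^ 2) ν :=
      (hauint.const_mul 2).add hu2int
    have : g (θ, ξ) = ∫ w, aa w ^ 2 ∂ν + ∫ w, (2 * (u w * aa w) + u w ^ 2) ∂ν := by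
      rw [hgdef]
      simp only
      rw [← integral_add haa2int hint2]
      exact integral_congr_ae (Eventually.of_forall fun w => hexpand w)
    rw [this]
    have h4 : ∫ w, (2 * (u w * aa w) + u w ^ 2) ∂ν = 2 * (∫ w, u w * aa w ∂ν) + ∫ w, u w ^ 2 ∂ν := by
      rw [integral_add (hauint.const_mul 2) hu2int, integral_const_mul]
    rw [h4, hcross]
    have h5 : (0:ℝ) ≤ ∫ w, u w ^ 2 ∂ν := integral_nonneg fun w => sq_nonneg _
    have h6 : g (θ, ωstar θ) = ∫ w, aa w ^ 2 ∂ν := rfl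
    linarith
  -- STEP 2: apply the uniform LLN
  have hULLN := ulln φ hφcont ν G hGint hdom W hWmeas hWlaw hWindep
  -- the uniform deviation process
  set T : ℕ → α → ℝ := fun n a =>
    ⨆ k : Θ × Ξ, |(∑ i ∈ Finset.range n, φ k (W i a)) / n - g k| with hTdef
  -- boundedness of the deviation family
  have hQcont : ∀ (n : ℕ) (a : α), Continuous fun k : Θ × Ξ =>
      (∑ i ∈ Finset.range n, φ k (W i a)) / n := by
    intro n a
    exact (continuous_finset_sum _ fun i _ => hφk (W i a)).div_const _
  have hbddT : ∀ (n : ℕ) (a : α), BddAbove (Set.range fun k : Θ × Ξ =>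
      |(∑ i ∈ Finset.range n, φ k (W i a)) / n - g k|) := by
    intro n a
    exact (isCompact_range (((hQcont n a).sub hgcont).abs)).bddAbove
  -- STEP 3: pointwise domination of the target sup by T
  have hsup_le : ∀ (n : ℕ) (a : α),
      (⨆ θ : Θ, |(∑ i ∈ Finset.range n, (f θ (W i a) - h (ωhat n a θ) ((W i a).2)) ^ 2) / n -
        ∫ w, (f θ w - h (ωstar θ) w.2) ^ 2 ∂ν|) ≤ T n a := by
    intro n a
    refine ciSup_le fun θ => ?_
    have hQhat_le : (∑ i ∈ Finset.range n, φ (θ, ωhat n a θ) (W i a)) / n ≤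
        (∑ i ∈ Finset.range n, φ (θ, ωstar θ) (W i a)) / n := hωhat n a θ (ωstar θ)
    have h1 : |(∑ i ∈ Finset.range n, φ (θ, ωstar θ) (W i a)) / n - g (θ, ωstar θ)| ≤ T n a :=
      le_ciSup (hbddT n a) (θ, ωstar θ)
    have h2 : |(∑ i ∈ Finset.range n, φ (θ, ωhat n a θ) (W i a)) / n - g (θ, ωhat n a θ)| ≤
        T n a := le_ciSup (hbddT n a) (θ, ωhat n a θ)
    have h3 : g (θ, ωstar θ) ≤ g (θ, ωhat n a θ) := gmin θ (ωhat n a θ)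
    have habs1 := abs_le.1 h1
    have habs2 := abs_le.1 h2
    rw [abs_le]
    constructor
    · -- g (θ, ωstar θ) − Qhat ≤ T
      have := habs2.1
      show -(T n a) ≤ _ - g (θ, ωstar θ)
      simp only [hgdef] at h3 ⊢
      linarith
    · have := habs1.2
      show _ - g (θ, ωstar θ) ≤ T n a
      simp only [hgdef] at hQhat_le ⊢
      linarith
  -- STEP 4: measurability of T
  have hTmeas : ∀ n, Measurable (T n) := by
    intro n
    obtain ⟨D, hDc, hDd⟩ := TopologicalSpace.exists_countable_dense (Θ × Ξ)
    haveI := hDc.to_subtype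
    have hrw : T n = fun a => ⨆ d : D,
        |(∑ i ∈ Finset.range n, φ (d : Θ × Ξ) (W i a)) / n - g (d : Θ × Ξ)| := by
      funext a
      exact ciSup_dense_eq hDd ((hQcont n a).sub hgcont).abs (hbddT n a)
    rw [hrw]
    refine Measurable.iSup fun d => ?_
    have : Measurable fun a => (∑ i ∈ Finset.range n, φ (d : Θ × Ξ) (W i a)) / n :=
      (Finset.measurable_sum _ fun i _ =>
        (hφw (d : Θ × Ξ)).measurable.comp (hWmeas i)).div_const _
    exact (this.sub measurable_const).abs
  -- STEP 5: conclude via convergence in measure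
  have hae : ∀ᵐ a ∂μ, Tendsto (fun n => T n a) atTop (𝓝 ((fun _ : α => (0:ℝ)) a)) := hULLN
  have hTim : TendstoInMeasure μ T atTop (fun _ => (0:ℝ)) :=
    tendstoInMeasure_of_tendsto_ae (fun n => (hTmeas n).aestronglyMeasurable) hae
  have hconv := hTim (ENNReal.ofReal ε) (ENNReal.ofReal_pos.2 hε)
  refine tendsto_of_tendsto_of_tendsto_of_le_of_le tendsto_const_nhds hconv
    (fun n => by positivity) (fun n => measure_mono ?_)
  intro a ha
  simp only [Set.mem_setOf_eq] at ha ⊢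
  have h1 : ε ≤ T n a := ha.trans (hsup_le n a)
  rw [edist_dist, dist_zero_right, Real.norm_eq_abs]
  exact ENNReal.ofReal_le_ofReal (h1.trans (le_abs_self _))
end

section
/- Let Θ be a compact metric space, K a compact metric space, and L > 0. For each n, let a_n : Θ × K → ℝ be a random function and let b : Θ × K → ℝ be a deterministic function such that, almost surely, for every z ∈ K the maps θ ↦ a_n(θ, z) and θ ↦ b(θ, z) are Lipschitz on Θ with constant L, and for every θ ∈ Θ the maps z ↦ a_n(θ, z) and z ↦ b(θ, z) are Lipschitz on K with constant L. If for every fixed (θ, z) ∈ Θ × K, a_n(θ, z) converges to b(θ, z) in probability as n → ∞, then sup over (θ, z) ∈ Θ × K of |a_n(θ, z) − b(θ, z)| converges to 0 in probability as n → ∞. -/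
open MeasureTheory ProbabilityTheory Filter

/-- from pointwise to uniform convergence in probability under a uniform
Lipschitz condition.

Let `Θ` and `K` be compact metric spaces and `L > 0`.  Suppose that for each `n`, almost
surely the random function `a_n : Θ × K → ℝ` is `L`-Lipschitz in each argument, the
deterministic function `b : Θ × K → ℝ` is `L`-Lipschitz in each argument, and
`a_n(θ, z) → b(θ, z)` in probability for every fixed `(θ, z)`.  Then
`sup_{(θ,z) ∈ Θ × K} |a_n(θ,z) − b(θ,z)| → 0` in probability. -/
theorem stmt9
    {Θ K : Type*} [MetricSpace Θ] [CompactSpace Θ] [MetricSpace K] [CompactSpace K]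
    {α : Type*} [MeasurableSpace α] (μ : Measure α) [IsProbabilityMeasure μ]
    (L : ℝ) (hL : 0 < L)
    (a : ℕ → α → Θ → K → ℝ) (b : Θ → K → ℝ)
    (hb_lipθ : ∀ z, LipschitzWith L.toNNReal fun θ => b θ z)
    (hb_lipz : ∀ θ, LipschitzWith L.toNNReal (b θ))
    (ha_lip : ∀ n, ∀ᵐ x ∂μ,
      (∀ z, LipschitzWith L.toNNReal fun θ => a n x θ z) ∧
      (∀ θ, LipschitzWith L.toNNReal (a n x θ)))
    (hconv : ∀ θ z, ∀ ε > (0 : ℝ),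
      Tendsto (fun n => μ {x | ε ≤ |a n x θ z - b θ z|}) atTop (nhds 0)) :
    ∀ ε > (0 : ℝ),
      Tendsto (fun n => μ {x | ε ≤ ⨆ θ : Θ, ⨆ z : K, |a n x θ z - b θ z|}) atTop (nhds 0) := by
  intro ε hε
  have hLcoe : (L.toNNReal : ℝ) = L := Real.coe_toNNReal L hL.le
  by_cases hΘ : Nonempty Θ
  swap
  · rw [not_nonempty_iff] at hΘ
    have hempty : ∀ n, {x : α | ε ≤ ⨆ θ : Θ, ⨆ z : K, |a n x θ z - b θ z|} = ∅ := by
      intro n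
      ext x
      simp only [Set.mem_setOf_eq, Set.mem_empty_iff_false, iff_false, not_le]
      rw [Real.iSup_of_isEmpty]
      exact hε
    simp only [hempty, measure_empty]
    exact tendsto_const_nhds
  by_cases hK : Nonempty K
  swap
  · rw [not_nonempty_iff] at hK
    have hempty : ∀ n, {x : α | ε ≤ ⨆ θ : Θ, ⨆ z : K, |a n x θ z - b θ z|} = ∅ := by
      intro n
      ext x
      simp only [Set.mem_setOf_eq, Set.mem_empty_iff_false, iff_false, not_le]
      have : ∀ θ : Θ, (⨆ z : K, |a n x θ z - b θ z|) = 0 := fun θ => Real.iSup_of_isEmpty _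
      simp only [this, ciSup_const]
      exact hε
    simp only [hempty, measure_empty]
    exact tendsto_const_nhds
  -- main case
  set δ : ℝ := ε / (16 * L) with hδdef
  have hδ : 0 < δ := div_pos hε (by positivity)
  obtain ⟨T, hTfin, hTcov⟩ := (Metric.totallyBounded_iff.mp
    (isCompact_univ : IsCompact (Set.univ : Set Θ)).totallyBounded) δ hδ
  obtain ⟨S, hSfin, hScov⟩ := (Metric.totallyBounded_iff.mp
    (isCompact_univ : IsCompact (Set.univ : Set K)).totallyBounded) δ hδ
  have key : ∀ n, μ {x | ε ≤ ⨆ θ : Θ, ⨆ z : K, |a n x θ z - b θ z|}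
      ≤ ∑ i ∈ hTfin.toFinset, ∑ j ∈ hSfin.toFinset, μ {x | ε / 2 ≤ |a n x i j - b i j|} := by
    intro n
    set P : Set α := {x | (∀ z, LipschitzWith L.toNNReal fun θ => a n x θ z) ∧
      (∀ θ, LipschitzWith L.toNNReal (a n x θ))} with hPdef
    have hPnull : μ Pᶜ = 0 := (ha_lip n)
    set A : Set α := {x | ε ≤ ⨆ θ : Θ, ⨆ z : K, |a n x θ z - b θ z|}
    have hsub : A ∩ P ⊆ ⋃ i ∈ hTfin.toFinset, ⋃ j ∈ hSfin.toFinset,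
        {x | ε / 2 ≤ |a n x i j - b i j|} := by
      intro x ⟨hxA, hxP⟩
      by_contra hcon
      simp only [Set.mem_iUnion, Set.mem_setOf_eq, not_exists, not_le] at hcon
      -- pointwise estimate
      have hpt : ∀ θ z, |a n x θ z - b θ z| ≤ ε / 2 + 4 * L * δ := by
        intro θ z
        obtain ⟨i, hiT, hiθ⟩ : ∃ i ∈ T, θ ∈ Metric.ball i δ := by
          have := hTcov (Set.mem_univ θ)
          simpa using this
        obtain ⟨j, hjS, hjz⟩ : ∃ j ∈ S, z ∈ Metric.ball j δ := by
          have := hScov (Set.mem_univ z)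
          simpa using this
        have hdθ : dist θ i ≤ δ := le_of_lt (Metric.mem_ball.mp hiθ)
        have hdz : dist z j ≤ δ := le_of_lt (Metric.mem_ball.mp hjz)
        have h1 : |a n x θ z - a n x i z| ≤ L * δ := by
          have := (hxP.1 z).dist_le_mul θ i
          rw [Real.dist_eq, hLcoe] at this
          exact this.trans (by nlinarith)
        have h2 : |a n x i z - a n x i j| ≤ L * δ := by
          have := (hxP.2 i).dist_le_mul z j
          rw [Real.dist_eq, hLcoe] at this
          exact this.trans (by nlinarith)
        have h3 : |a n x i j - b i j| < ε / 2 := by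
          have := hcon i (hTfin.mem_toFinset.mpr hiT) j (hSfin.mem_toFinset.mpr hjS)
          exact this
        have h4 : |b i j - b i z| ≤ L * δ := by
          have := (hb_lipz i).dist_le_mul j z
          rw [Real.dist_eq, hLcoe, dist_comm] at this
          exact this.trans (by nlinarith)
        have h5 : |b i z - b θ z| ≤ L * δ := by
          have := (hb_lipθ z).dist_le_mul i θ
          rw [Real.dist_eq, hLcoe, dist_comm] at this
          exact this.trans (by nlinarith)
        have : |a n x θ z - b θ z| ≤ |a n x θ z - a n x i z| + |a n x i z - a n x i j|
            + |a n x i j - b i j| + |b i j - b i z| + |b i z - b θ z| := by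
          have := abs_sub_le (a n x θ z) (a n x i z) (b θ z)
          have h12 := abs_sub_le (a n x i z) (a n x i j) (b θ z)
          have h13 := abs_sub_le (a n x i j) (b i j) (b θ z)
          have h14 := abs_sub_le (b i j) (b i z) (b θ z)
          linarith
        linarith
      have hsup : (⨆ θ : Θ, ⨆ z : K, |a n x θ z - b θ z|) ≤ ε / 2 + 4 * L * δ := by
        refine ciSup_le fun θ => ciSup_le fun z => hpt θ z
      have hδval : 4 * L * δ = ε / 4 := by
        rw [hδdef]; field_simp; ring
      rw [hδval] at hsup
      have : ε ≤ ε / 2 + ε / 4 := le_trans hxA hsup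
      linarith
    calc μ A ≤ μ ((A ∩ P) ∪ Pᶜ) := by
          refine measure_mono fun x hx => ?_
          by_cases hxP : x ∈ P
          · exact Or.inl ⟨hx, hxP⟩
          · exact Or.inr hxP
      _ ≤ μ (A ∩ P) + μ Pᶜ := measure_union_le _ _
      _ = μ (A ∩ P) := by rw [hPnull, add_zero]
      _ ≤ μ (⋃ i ∈ hTfin.toFinset, ⋃ j ∈ hSfin.toFinset,
            {x | ε / 2 ≤ |a n x i j - b i j|}) := measure_mono hsub
      _ ≤ ∑ i ∈ hTfin.toFinset, μ (⋃ j ∈ hSfin.toFinset,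
            {x | ε / 2 ≤ |a n x i j - b i j|}) := measure_biUnion_finset_le _ _
      _ ≤ ∑ i ∈ hTfin.toFinset, ∑ j ∈ hSfin.toFinset, μ {x | ε / 2 ≤ |a n x i j - b i j|} :=
          Finset.sum_le_sum fun i _ => measure_biUnion_finset_le _ _
  have hsum : Tendsto (fun n => ∑ i ∈ hTfin.toFinset, ∑ j ∈ hSfin.toFinset,
      μ {x | ε / 2 ≤ |a n x i j - b i j|}) atTop (nhds 0) := by
    have : Tendsto (fun n => ∑ i ∈ hTfin.toFinset, ∑ j ∈ hSfin.toFinset,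
        μ {x | ε / 2 ≤ |a n x i j - b i j|}) atTop
        (nhds (∑ i ∈ hTfin.toFinset, ∑ j ∈ hSfin.toFinset, (0 : ENNReal))) := by
      refine tendsto_finset_sum _ fun i _ => tendsto_finset_sum _ fun j _ => ?_
      exact hconv i j (ε / 2) (by linarith)
    simpa using this
  exact tendsto_of_tendsto_of_tendsto_of_le_of_le tendsto_const_nhds hsum
    (fun n => zero_le) key
end

section
/- Let Z be a random variable with values in ℝ^{d_Z}, let (z_i), i = 1, 2, …, be i.i.d. copies of Z, and let Θ be a set. Let H : ℝ^{d_Z} → ℝ be measurable with E[H(Z)²] < ∞. For each n, let a_n : Θ × ℝ^{d_Z} → ℝ be a random function and let b : Θ × ℝ^{d_Z} → ℝ be a function such that |a_n(θ, z)| ≤ H(z) and |b(θ, z)| ≤ H(z) for all θ ∈ Θ, z ∈ ℝ^{d_Z}, and all outcomes. Suppose that for every r > 0, sup over θ ∈ Θ and z with ‖z‖ ≤ r of |a_n(θ, z)² − b(θ, z)²| converges to 0 in probability as n → ∞. Then sup over θ ∈ Θ of | (1/n) Σ_{i=1}^n ( a_n(θ, z_i)² − b(θ, z_i)² ) | converges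 to 0 in probability as n → ∞. -/
open MeasureTheory ProbabilityTheory Filter

set_option maxHeartbeats 1000000 in
/-- truncation argument for dominated empirical averages.

Let `(z_i)` be i.i.d. copies of a random variable with law `ν` on `ℝ^{dZ}`, and let `H` be
measurable with `E[H(Z)²] < ∞`.  Suppose the random functions `a_n(θ, z)` and the
function `b(θ, z)` are dominated by `H(z)`, and for every radius `r > 0`,
`sup_{θ, ‖z‖ ≤ r} |a_n(θ,z)² − b(θ,z)²| → 0` in probability.  Then
`sup_θ |(1/n) ∑_i (a_n(θ, z_i)² − b(θ, z_i)²)| → 0` in probability. -/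
theorem stmt10
    {α : Type*} [MeasurableSpace α] (μ : Measure α) [IsProbabilityMeasure μ]
    {dZ : ℕ} {Θ : Type*}
    (ν : Measure (EuclideanSpace ℝ (Fin dZ))) [IsProbabilityMeasure ν]
    (z : ℕ → α → EuclideanSpace ℝ (Fin dZ))
    (hzmeas : ∀ i, Measurable (z i))
    (hzlaw : ∀ i, μ.map (z i) = ν)
    (hzindep : iIndepFun z μ)
    (H : EuclideanSpace ℝ (Fin dZ) → ℝ) (hHmeas : Measurable H)
    (hHL2 : MemLp H 2 ν)
    (a : ℕ → α → Θ → EuclideanSpace ℝ (Fin dZ) → ℝ)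
    (b : Θ → EuclideanSpace ℝ (Fin dZ) → ℝ)
    (hadom : ∀ n x θ w, |a n x θ w| ≤ H w)
    (hbdom : ∀ θ w, |b θ w| ≤ H w)
    (hunif : ∀ r > (0 : ℝ), ∀ ε > (0 : ℝ),
      Tendsto (fun n => μ {x | ∃ θ, ∃ w : EuclideanSpace ℝ (Fin dZ),
        ‖w‖ ≤ r ∧ ε ≤ |(a n x θ w) ^ 2 - (b θ w) ^ 2|}) atTop (nhds 0)) :
    ∀ ε > (0 : ℝ),
      Tendsto (fun n => μ {x | ε ≤ ⨆ θ : Θ,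
        |(∑ i ∈ Finset.range n, ((a n x θ (z i x)) ^ 2 - (b θ (z i x)) ^ 2)) / n|})
        atTop (nhds 0) := by
  intro ε hε
  -- H² is integrable
  have hH2 : Integrable (fun w => H w ^ 2) ν :=
    (memLp_two_iff_integrable_sq hHmeas.aestronglyMeasurable).mp hHL2
  -- truncation functions
  set F : ℕ → EuclideanSpace ℝ (Fin dZ) → ℝ :=
    fun k w => if (k : ℝ) < ‖w‖ then 2 * H w ^ 2 else 0 with hF
  have hFmeas : ∀ k, Measurable (F k) := by
    intro k
    exact Measurable.ite (measurableSet_lt measurable_const measurable_norm)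
      ((hHmeas.pow_const 2).const_mul 2) measurable_const
  have hFnonneg : ∀ k w, 0 ≤ F k w := by
    intro k w
    simp only [hF]
    split <;> positivity
  have hFbound : ∀ k w, F k w ≤ 2 * H w ^ 2 := by
    intro k w
    simp only [hF]
    split
    · exact le_rfl
    · positivity
  have hFbound' : ∀ k w, |F k w| ≤ 2 * H w ^ 2 := by
    intro k w
    rw [abs_of_nonneg (hFnonneg k w)]; exact hFbound k w
  have hFint : ∀ k, Integrable (F k) ν := fun k =>
    (hH2.const_mul 2).mono' (hFmeas k).aestronglyMeasurable
      (Filter.Eventually.of_forall (hFbound' k))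
  -- the integrals of F k tend to 0
  have hlim : Tendsto (fun k => ∫ w, F k w ∂ν) atTop (nhds (∫ _w, (0:ℝ) ∂ν)) := by
    apply tendsto_integral_of_dominated_convergence (fun w => 2 * H w ^ 2)
      (fun k => (hFmeas k).aestronglyMeasurable) (hH2.const_mul 2)
      (fun k => Filter.Eventually.of_forall (hFbound' k))
    refine Filter.Eventually.of_forall (fun w => ?_)
    have hev : ∀ᶠ k : ℕ in atTop, F k w = 0 := by
      filter_upwards [eventually_ge_atTop (Nat.ceil ‖w‖)] with k hk
      have : ‖w‖ ≤ (k : ℝ) := (Nat.le_ceil ‖w‖).trans (Nat.cast_le.mpr hk)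
      simp only [hF, if_neg (not_lt.mpr this)]
    exact Tendsto.congr' (hev.mono fun k h => h.symm) tendsto_const_nhds
  rw [integral_zero] at hlim
  -- choose a truncation level k ≥ 1 with ∫ F k < ε/4
  obtain ⟨k, hk1, hkint⟩ : ∃ k : ℕ, 1 ≤ k ∧ ∫ w, F k w ∂ν < ε / 4 := by
    have h := ((hlim.eventually (eventually_lt_nhds (show (0:ℝ) < ε/4 by linarith))).and
      (eventually_ge_atTop 1)).exists
    obtain ⟨k, h1, h2⟩ := h
    exact ⟨k, h2, h1⟩
  set r : ℝ := (k : ℝ) with hr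
  have hrpos : 0 < r := by
    simp only [hr]; exact_mod_cast Nat.lt_of_lt_of_le Nat.zero_lt_one hk1
  set f : EuclideanSpace ℝ (Fin dZ) → ℝ := F k with hfdef
  set m : ℝ := ∫ w, f w ∂ν with hm
  have hm4 : m < ε / 4 := hkint
  have hmnonneg : 0 ≤ m := integral_nonneg (hFnonneg k)
  -- SLLN for f ∘ z i
  set g : ℕ → α → ℝ := fun i x => f (z i x) with hg
  have hgmeas : ∀ i, Measurable (g i) := fun i => (hFmeas k).comp (hzmeas i)
  have hident : ∀ i, IdentDistrib (g i) (g 0) μ μ := by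
    intro i
    have hz : IdentDistrib (z i) (z 0) μ μ :=
      ⟨(hzmeas i).aemeasurable, (hzmeas 0).aemeasurable, by rw [hzlaw i, hzlaw 0]⟩
    exact hz.comp (hFmeas k)
  have hindep : Pairwise (Function.onFun (IndepFun · · μ) g) := by
    intro i j hij
    exact (hzindep.indepFun hij).comp (hFmeas k) (hFmeas k)
  have hgint : Integrable (g 0) μ := by
    rw [hg]
    have : Integrable f (μ.map (z 0)) := by rw [hzlaw 0]; exact hFint k
    exact (integrable_map_measure (hFmeas k).aestronglyMeasurable
      (hzmeas 0).aemeasurable).mp this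
  have hmean : μ[g 0] = m := by
    rw [hg, hm]
    rw [← hzlaw 0, integral_map (hzmeas 0).aemeasurable (hFmeas k).aestronglyMeasurable]
  have hslln : ∀ᵐ x ∂μ, Tendsto (fun n : ℕ => (∑ i ∈ Finset.range n, g i x) / n)
      atTop (nhds m) := by
    have := strong_law_ae_real g hgint hindep hident
    rw [hmean] at this
    exact this
  -- convergence in measure of the averages A n
  set A : ℕ → α → ℝ := fun n x => (∑ i ∈ Finset.range n, g i x) / n with hA
  have hAmeas : ∀ n, Measurable (A n) := fun n =>
    (Finset.measurable_sum _ (fun i _ => hgmeas i)).div_const _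
  have hTIM : TendstoInMeasure μ A atTop (fun _ => m) :=
    tendstoInMeasure_of_tendsto_ae (fun n => (hAmeas n).aestronglyMeasurable) hslln
  have hC : Tendsto (fun n => μ {x | ε / 2 - m ≤ dist (A n x) m}) atTop (nhds 0) :=
    tendstoInMeasure_iff_dist.mp hTIM (ε / 2 - m) (by linarith)
  have hB : Tendsto (fun n => μ {x | ∃ θ, ∃ w : EuclideanSpace ℝ (Fin dZ),
      ‖w‖ ≤ r ∧ ε / 2 ≤ |(a n x θ w) ^ 2 - (b θ w) ^ 2|}) atTop (nhds 0) :=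
    hunif r hrpos (ε / 2) (by linarith)
  -- the key inclusion
  have hsub : ∀ n : ℕ, 1 ≤ n →
      {x | ε ≤ ⨆ θ : Θ,
        |(∑ i ∈ Finset.range n, ((a n x θ (z i x)) ^ 2 - (b θ (z i x)) ^ 2)) / n|} ⊆
      {x | ∃ θ, ∃ w : EuclideanSpace ℝ (Fin dZ),
        ‖w‖ ≤ r ∧ ε / 2 ≤ |(a n x θ w) ^ 2 - (b θ w) ^ 2|} ∪
      {x | ε / 2 - m ≤ dist (A n x) m} := by
    intro n hn x hx
    by_cases hxB : ∃ θ, ∃ w : EuclideanSpace ℝ (Fin dZ),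
        ‖w‖ ≤ r ∧ ε / 2 ≤ |(a n x θ w) ^ 2 - (b θ w) ^ 2|
    · exact Set.mem_union_left _ hxB
    push_neg at hxB
    right
    -- pointwise bound on each term
    have hterm : ∀ (θ : Θ) (i : ℕ),
        |(a n x θ (z i x)) ^ 2 - (b θ (z i x)) ^ 2| ≤ ε / 2 + f (z i x) := by
      intro θ i
      by_cases hzi : ‖z i x‖ ≤ r
      · have := hxB θ (z i x) hzi
        have h0 : 0 ≤ f (z i x) := hFnonneg k _
        linarith
      · have hf : f (z i x) = 2 * H (z i x) ^ 2 := by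
          simp only [hfdef, hF, if_pos (show (k:ℝ) < ‖z i x‖ from not_le.mp hzi)]
        have ha2 : (a n x θ (z i x)) ^ 2 ≤ H (z i x) ^ 2 := by
          rw [← sq_abs (a n x θ (z i x)), ← sq_abs (H (z i x))]
          exact pow_le_pow_left₀ (abs_nonneg _) ((hadom n x θ _).trans (le_abs_self _)) 2
        have hb2 : (b θ (z i x)) ^ 2 ≤ H (z i x) ^ 2 := by
          rw [← sq_abs (b θ (z i x)), ← sq_abs (H (z i x))]
          exact pow_le_pow_left₀ (abs_nonneg _) ((hbdom θ _).trans (le_abs_self _)) 2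
        have habs : |(a n x θ (z i x)) ^ 2 - (b θ (z i x)) ^ 2| ≤
            (a n x θ (z i x)) ^ 2 + (b θ (z i x)) ^ 2 := by
          rw [abs_sub_comm]
          refine (abs_sub _ _).trans ?_
          rw [abs_of_nonneg (sq_nonneg _), abs_of_nonneg (sq_nonneg _)]
          linarith
        rw [hf]
        linarith
    -- bound on the suprema
    have hAnonneg : 0 ≤ A n x := by
      apply div_nonneg _ (Nat.cast_nonneg n)
      exact Finset.sum_nonneg fun i _ => hFnonneg k _
    have hsup : (⨆ θ : Θ,
        |(∑ i ∈ Finset.range n, ((a n x θ (z i x)) ^ 2 - (b θ (z i x)) ^ 2)) / n|) ≤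
        ε / 2 + A n x := by
      apply Real.iSup_le _ (by linarith)
      intro θ
      have hnpos : (0:ℝ) < n := by exact_mod_cast hn
      rw [abs_div, abs_of_pos hnpos, div_le_iff₀ hnpos]
      calc |∑ i ∈ Finset.range n, ((a n x θ (z i x)) ^ 2 - (b θ (z i x)) ^ 2)|
          ≤ ∑ i ∈ Finset.range n, |(a n x θ (z i x)) ^ 2 - (b θ (z i x)) ^ 2| :=
            Finset.abs_sum_le_sum_abs _ _
        _ ≤ ∑ i ∈ Finset.range n, (ε / 2 + f (z i x)) :=
            Finset.sum_le_sum fun i _ => hterm θ i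
        _ = n * (ε / 2) + ∑ i ∈ Finset.range n, g i x := by
            rw [Finset.sum_add_distrib, Finset.sum_const, Finset.card_range]
            simp [hg, mul_comm]
        _ = (ε / 2 + A n x) * n := by
            rw [hA]
            field_simp
    have : ε / 2 ≤ A n x := by
      have := le_trans hx hsup
      linarith
    simp only [Set.mem_setOf_eq, Real.dist_eq]
    have : A n x - m ≤ |A n x - m| := le_abs_self _
    linarith [le_abs_self (A n x - m), (show ε / 2 ≤ A n x from by
      have := le_trans hx hsup; linarith)]
  -- conclude by squeezing
  have hBC : Tendsto (fun n => μ {x | ∃ θ, ∃ w : EuclideanSpace ℝ (Fin dZ),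
      ‖w‖ ≤ r ∧ ε / 2 ≤ |(a n x θ w) ^ 2 - (b θ w) ^ 2|} +
      μ {x | ε / 2 - m ≤ dist (A n x) m}) atTop (nhds 0) := by
    have := hB.add hC
    rwa [add_zero] at this
  apply tendsto_of_tendsto_of_tendsto_of_le_of_le' tendsto_const_nhds hBC
  · exact Filter.Eventually.of_forall fun n => zero_le
  · filter_upwards [eventually_ge_atTop 1] with n hn
    exact (measure_mono (hsub n hn)).trans (measure_union_le _ _)
end

section
/- Let (X, Z) be a random variable with values in ℝ^{d_X} × ℝ^{d_Z}, let (x_i, z_i), i = 1, 2, …, be i.i.d. copies of (X, Z), and let Θ be a compact metric space. Let F : ℝ^{d_X + d_Z} → ℝ and H : ℝ^{d_Z} → ℝ be measurable with E[F(X,Z)²] < ∞ and E[H(Z)²] < ∞. Let f : Θ × ℝ^{d_X + d_Z} → ℝ be continuous with |f(θ, x, z)| ≤ F(x, z) for all θ, x, z. For each n, let c_n, c : Θ × ℝ^{d_Z} → ℝ satisfy |c_n(θ, z)| ≤ H(z) and |c(θ, z)| ≤ H(z) for all θ, z and all outcomes (c_n random, c deterministic), and suppose that for every compact K ⊆ ℝ^{d_Z},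 sup over θ ∈ Θ, z ∈ K of |c_n(θ, z) − c(θ, z)| converges to 0 in probability as n → ∞. Then sup over θ ∈ Θ of | (1/n) Σ_{i=1}^n f(θ, x_i, z_i) ( c_n(θ, z_i) − c(θ, z_i) ) | converges to 0 in probability as n → ∞. -/
open MeasureTheory ProbabilityTheory Filter

lemma lln_aux {α P : Type*} [MeasurableSpace α] [MeasurableSpace P]
    (μ : Measure α) [IsProbabilityMeasure μ] (ν : Measure P)
    (w : ℕ → α → P) (hwmeas : ∀ i, Measurable (w i)) (hwlaw : ∀ i, μ.map (w i) = ν)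
    (hwindep : iIndepFun w μ)
    (g : P → ℝ) (hg : Measurable g) (hgint : Integrable g ν) :
    TendstoInMeasure μ (fun n x => (∑ i ∈ Finset.range n, g (w i x)) / n) atTop
      (fun _ => ∫ p, g p ∂ν) := by
  have hint0 : Integrable (fun x => g (w 0 x)) μ := by
    have h := hgint
    rw [← hwlaw 0] at h
    exact (integrable_map_measure hg.aestronglyMeasurable (hwmeas 0).aemeasurable).mp h
  have hindep : Pairwise (Function.onFun (IndepFun · · μ) fun i x => g (w i x)) := by
    intro i j hij
    exact (hwindep.indepFun hij).comp hg hg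
  have hident : ∀ i, IdentDistrib (fun x => g (w i x)) (fun x => g (w 0 x)) μ μ := by
    intro i
    refine ⟨(hg.comp (hwmeas i)).aemeasurable, (hg.comp (hwmeas 0)).aemeasurable, ?_⟩
    show μ.map (g ∘ w i) = μ.map (g ∘ w 0)
    rw [← Measure.map_map hg (hwmeas i), ← Measure.map_map hg (hwmeas 0), hwlaw i, hwlaw 0]
  have hae := strong_law_ae_real (fun i x => g (w i x)) hint0 hindep hident
  have hEq : (∫ x, g (w 0 x) ∂μ) = ∫ p, g p ∂ν := by
    rw [← hwlaw 0, integral_map (hwmeas 0).aemeasurable hg.aestronglyMeasurable]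
  refine tendstoInMeasure_of_tendsto_ae (fun n => ?_) ?_
  · exact ((Finset.measurable_sum _ fun i _ => hg.comp (hwmeas i)).div_const _).aestronglyMeasurable
  · filter_upwards [hae] with x hx
    rw [← hEq]
    exact hx

/-- uniform convergence in probability of the dominated empirical
cross-term.

Let `(x_i, z_i)` be i.i.d. copies of `(X, Z)` with law `ν` on `ℝ^{dX} × ℝ^{dZ}`, `Θ` a
compact metric space, `f : Θ × ℝ^{dX+dZ} → ℝ` continuous and dominated by `F` with
`E[F(X,Z)²] < ∞`, and `c_n, c` dominated by `H` with `E[H(Z)²] < ∞`.  If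
`sup_{θ, z ∈ K} |c_n(θ,z) − c(θ,z)| → 0` in probability for every compact `K ⊆ ℝ^{dZ}`,
then `sup_θ |(1/n) ∑_i f(θ, x_i, z_i) (c_n(θ, z_i) − c(θ, z_i))| → 0` in probability. -/
theorem stmt11
    {α : Type*} [MeasurableSpace α] (μ : Measure α) [IsProbabilityMeasure μ]
    {dX dZ : ℕ} {Θ : Type*} [MetricSpace Θ] [CompactSpace Θ]
    (ν : Measure ((Fin dX → ℝ) × EuclideanSpace ℝ (Fin dZ))) [IsProbabilityMeasure ν]
    (w : ℕ → α → (Fin dX → ℝ) × EuclideanSpace ℝ (Fin dZ))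
    (hwmeas : ∀ i, Measurable (w i))
    (hwlaw : ∀ i, μ.map (w i) = ν)
    (hwindep : iIndepFun w μ)
    (F : (Fin dX → ℝ) × EuclideanSpace ℝ (Fin dZ) → ℝ) (hFmeas : Measurable F)
    (hFL2 : MemLp F 2 ν)
    (H : EuclideanSpace ℝ (Fin dZ) → ℝ) (hHmeas : Measurable H)
    (hHL2 : MemLp (fun p => H p.2) 2 ν)
    (f : Θ → (Fin dX → ℝ) × EuclideanSpace ℝ (Fin dZ) → ℝ)
    (hf_cont : Continuous fun q : Θ × ((Fin dX → ℝ) × EuclideanSpace ℝ (Fin dZ)) => f q.1 q.2)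
    (hfdom : ∀ θ p, |f θ p| ≤ F p)
    (c : ℕ → α → Θ → EuclideanSpace ℝ (Fin dZ) → ℝ)
    (c₀ : Θ → EuclideanSpace ℝ (Fin dZ) → ℝ)
    (hcdom : ∀ n x θ v, |c n x θ v| ≤ H v)
    (hc₀dom : ∀ θ v, |c₀ θ v| ≤ H v)
    (hunif : ∀ K : Set (EuclideanSpace ℝ (Fin dZ)), IsCompact K → ∀ ε > (0 : ℝ),
      Tendsto (fun n => μ {x | ∃ θ, ∃ v ∈ K, ε ≤ |c n x θ v - c₀ θ v|}) atTop (nhds 0)) :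
    ∀ ε > (0 : ℝ),
      Tendsto (fun n => μ {x | ε ≤ ⨆ θ : Θ,
        |(∑ i ∈ Finset.range n,
            f θ (w i x) * (c n x θ ((w i x).2) - c₀ θ ((w i x).2))) / n|})
        atTop (nhds 0) := by
  intro ε hε
  rcases isEmpty_or_nonempty Θ with hΘ | hΘ
  · -- empty case: the sup is 0 and the set is empty
    have : ∀ n, {x : α | ε ≤ ⨆ θ : Θ,
        |(∑ i ∈ Finset.range n,
            f θ (w i x) * (c n x θ ((w i x).2) - c₀ θ ((w i x).2))) / n|} = ∅ := by
      intro n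
      ext x
      simp only [Set.mem_setOf_eq, Set.mem_empty_iff_false, iff_false, not_le]
      rw [Real.iSup_of_isEmpty]
      exact hε
    simp only [this, measure_empty]
    exact tendsto_const_nhds
  -- nonempty case
  have hF0 : ∀ p, 0 ≤ F p := fun p =>
    le_trans (abs_nonneg _) (hfdom (Classical.arbitrary Θ) p)
  have hH0 : ∀ v, 0 ≤ H v := fun v =>
    le_trans (abs_nonneg _) (hc₀dom (Classical.arbitrary Θ) v)
  -- F·H is integrable w.r.t. ν
  have hGint : Integrable (fun p => F p * H p.2) ν := by
    have := (hFL2.smul (r := 1) hHL2).integrable le_rfl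
    simpa [smul_eq_mul, mul_comm, Pi.mul_def] using this
  -- choose a compact set K with small tail integral
  have hKlim : Tendsto (fun m : ℕ => ∫ p, Set.indicator
      {q : (Fin dX → ℝ) × EuclideanSpace ℝ (Fin dZ) |
        q.2 ∉ Metric.closedBall (0 : EuclideanSpace ℝ (Fin dZ)) (m : ℝ)}
      (fun p => F p * H p.2) p ∂ν) atTop (nhds 0) := by
    have h0 : (0 : ℝ) = ∫ _p, (0 : ℝ) ∂ν := by simp
    rw [h0]
    apply tendsto_integral_of_dominated_convergence (fun p => F p * H p.2)
    · intro m
      exact ((hFmeas.mul (hHmeas.comp measurable_snd)).indicator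
        ((measurableSet_closedBall.preimage measurable_snd).compl)).aestronglyMeasurable
    · exact hGint
    · intro m
      filter_upwards with p
      rw [Real.norm_eq_abs]
      by_cases hp : p ∈ {q : (Fin dX → ℝ) × EuclideanSpace ℝ (Fin dZ) |
          q.2 ∉ Metric.closedBall (0 : EuclideanSpace ℝ (Fin dZ)) (m : ℝ)}
      · rw [Set.indicator_of_mem hp, abs_of_nonneg (mul_nonneg (hF0 p) (hH0 p.2))]
      · rw [Set.indicator_of_notMem hp]
        simpa using mul_nonneg (hF0 p) (hH0 p.2)
    · filter_upwards with p
      obtain ⟨m, hm⟩ := exists_nat_ge ‖p.2‖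
      apply tendsto_const_nhds.congr'
      filter_upwards [eventually_ge_atTop m] with k hk
      rw [Set.indicator_of_notMem]
      simp only [Set.mem_setOf_eq, not_not]
      rw [Metric.mem_closedBall, dist_zero_right]
      exact hm.trans (by exact_mod_cast hk)
  obtain ⟨m₀, hm₀⟩ := (hKlim.eventually (gt_mem_nhds (by positivity : (0:ℝ) < ε/8))).exists
  set K : Set (EuclideanSpace ℝ (Fin dZ)) :=
    Metric.closedBall (0 : EuclideanSpace ℝ (Fin dZ)) (m₀ : ℝ) with hKdef
  have hK : IsCompact K := isCompact_closedBall _ _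
  set A : Set ((Fin dX → ℝ) × EuclideanSpace ℝ (Fin dZ)) := {q | q.2 ∉ K} with hAdef
  have hAmeas : MeasurableSet A := (measurableSet_closedBall.preimage measurable_snd).compl
  set G' : (Fin dX → ℝ) × EuclideanSpace ℝ (Fin dZ) → ℝ :=
    Set.indicator A (fun p => F p * H p.2) with hG'def
  have hG'meas : Measurable G' := (hFmeas.mul (hHmeas.comp measurable_snd)).indicator hAmeas
  have hG'int : Integrable G' ν := hGint.indicator hAmeas
  have hG'nonneg : ∀ p, 0 ≤ G' p := fun p =>
    Set.indicator_nonneg (fun q _ => mul_nonneg (hF0 q) (hH0 q.2)) p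
  set m₂ : ℝ := ∫ p, G' p ∂ν with hm₂def
  have hm₂lt : m₂ < ε / 8 := hm₀
  set m₁ : ℝ := ∫ p, F p ∂ν with hm₁def
  have hm₁0 : 0 ≤ m₁ := integral_nonneg hF0
  set δ : ℝ := (ε / 4) / (m₁ + 1) with hδdef
  have hδ : 0 < δ := div_pos (by positivity) (by linarith)
  have hδm : δ * (m₁ + 1) = ε / 4 := div_mul_cancel₀ _ (by linarith)
  -- the three convergence facts
  have hlln1 := tendstoInMeasure_iff_dist.mp (lln_aux μ ν w hwmeas hwlaw hwindep F hFmeas (hFL2.integrable one_le_two))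
    1 one_pos
  have hlln2 := tendstoInMeasure_iff_dist.mp (lln_aux μ ν w hwmeas hwlaw hwindep G' hG'meas hG'int)
    (ε/8) (by positivity)
  have hE1 := hunif K hK δ hδ
  have hsum0 : Tendsto (fun n => μ {x | ∃ θ, ∃ v ∈ K, δ ≤ |c n x θ v - c₀ θ v|}
      + (μ {x | 1 ≤ dist ((∑ i ∈ Finset.range n, F (w i x)) / (n:ℝ)) m₁}
        + μ {x | ε/8 ≤ dist ((∑ i ∈ Finset.range n, G' (w i x)) / (n:ℝ)) m₂}))
      atTop (nhds 0) := by
    have := hE1.add (hlln1.add hlln2)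
    simpa using this
  refine tendsto_of_tendsto_of_tendsto_of_le_of_le tendsto_const_nhds hsum0
    (fun n => zero_le) (fun n => ?_)
  refine le_trans (measure_mono ?_) ((measure_union_le _ _).trans
    (add_le_add le_rfl (measure_union_le _ _)))
  -- the key inclusion
  intro x hx
  simp only [Set.mem_setOf_eq] at hx
  by_contra hmem
  simp only [Set.mem_union, Set.mem_setOf_eq, not_or] at hmem
  obtain ⟨hn1, hn2, hn3⟩ := hmem
  push_neg at hn1
  rw [not_le, Real.dist_eq, abs_sub_lt_iff] at hn2 hn3
  set Tn : ℝ := (∑ i ∈ Finset.range n, F (w i x)) / (n:ℝ) with hTndef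
  set Rn : ℝ := (∑ i ∈ Finset.range n, G' (w i x)) / (n:ℝ) with hRndef
  have hTn0 : 0 ≤ Tn := div_nonneg (Finset.sum_nonneg fun i _ => hF0 _) (Nat.cast_nonneg n)
  have hRn0 : 0 ≤ Rn := div_nonneg (Finset.sum_nonneg fun i _ => hG'nonneg _) (Nat.cast_nonneg n)
  have hbound : ∀ θ : Θ, |(∑ i ∈ Finset.range n,
      f θ (w i x) * (c n x θ ((w i x).2) - c₀ θ ((w i x).2))) / (n:ℝ)|
      ≤ δ * Tn + 2 * Rn := by
    intro θ
    have hterm : ∀ i, |f θ (w i x) * (c n x θ ((w i x).2) - c₀ θ ((w i x).2))|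
        ≤ δ * F (w i x) + 2 * G' (w i x) := by
      intro i
      set p := w i x with hpdef
      rw [abs_mul]
      by_cases hp : p.2 ∈ K
      · have hd : |c n x θ p.2 - c₀ θ p.2| < δ := hn1 θ p.2 hp
        have : |f θ p| * |c n x θ p.2 - c₀ θ p.2| ≤ F p * δ :=
          mul_le_mul (hfdom θ p) hd.le (abs_nonneg _) (hF0 p)
        have h2 := hG'nonneg p
        nlinarith
      · have hd : |c n x θ p.2 - c₀ θ p.2| ≤ 2 * H p.2 := by
          calc |c n x θ p.2 - c₀ θ p.2| ≤ |c n x θ p.2| + |c₀ θ p.2| := abs_sub _ _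
          _ ≤ H p.2 + H p.2 := add_le_add (hcdom n x θ p.2) (hc₀dom θ p.2)
          _ = 2 * H p.2 := by ring
        have hG'eq : G' p = F p * H p.2 := Set.indicator_of_mem (show p ∈ A from hp) _
        have : |f θ p| * |c n x θ p.2 - c₀ θ p.2| ≤ F p * (2 * H p.2) :=
          mul_le_mul (hfdom θ p) hd (abs_nonneg _) (hF0 p)
        nlinarith [mul_nonneg hδ.le (hF0 p)]
    calc |(∑ i ∈ Finset.range n,
          f θ (w i x) * (c n x θ ((w i x).2) - c₀ θ ((w i x).2))) / (n:ℝ)|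
        = |∑ i ∈ Finset.range n,
          f θ (w i x) * (c n x θ ((w i x).2) - c₀ θ ((w i x).2))| * ((n:ℝ))⁻¹ := by
          rw [abs_div, Nat.abs_cast, div_eq_mul_inv]
      _ ≤ (∑ i ∈ Finset.range n, (δ * F (w i x) + 2 * G' (w i x))) * ((n:ℝ))⁻¹ := by
          apply mul_le_mul_of_nonneg_right _ (by positivity)
          exact (Finset.abs_sum_le_sum_abs _ _).trans (Finset.sum_le_sum fun i _ => hterm i)
      _ = δ * Tn + 2 * Rn := by
          rw [Finset.sum_add_distrib, ← Finset.mul_sum, ← Finset.mul_sum, hTndef, hRndef]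
          field_simp
          try ring
  have hsup : (⨆ θ : Θ, |(∑ i ∈ Finset.range n,
      f θ (w i x) * (c n x θ ((w i x).2) - c₀ θ ((w i x).2))) / (n:ℝ)|)
      ≤ δ * Tn + 2 * Rn :=
    Real.iSup_le hbound (by positivity)
  have h1 : δ * Tn ≤ δ * (m₁ + 1) := mul_le_mul_of_nonneg_left (by linarith [hn2.1]) hδ.le
  have h2 : Rn < m₂ + ε/8 := by linarith [hn3.1]
  have : ε ≤ δ * Tn + 2 * Rn := le_trans hx hsup
  linarith
end
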